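/- arXiv:1707.02409 — 4 statements merged into one kernel-verified Lean document; each statement's English description precedes it below -/
import Mathlib

section
/- Assume X_1,…,X_n are i.i.d. Bernoulli(p) and Y_k = X_k ⊕ V_k, with V_1,…,V_n i.i.d. Bernoulli(α) independent of X^n, where p ∈ (1/2, 1), α ∈ (0, 1/2), and 1−α > p. Let ε_L < 1−α be such that h̲_n(ε)^n = 1 − ζ_n(ε)q^n for all ε ∈ [ε_L, 1−α], where q := α(1−p) + (1−α)p and ζ_n(ε) := ((1−α)^n − ε^n)/(((1−α)p)^n − (α(1−p))^n) (such ε_L exists). Then for all sufficiently large n and every ε ∈ [ε_L, 1−α]: h̲_n(ε) − h_n^i(ε) ≥ ((1−α) − ε)·(Φ(1) − Φ(n)), where Φ(m) := q^m (1−α)^{m−1} / (((1−α)p)^m − (α(1−p))^m). -/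
/-!
By the closed form, `h̲_n(ε)^n = 1 - s (1 - t^n)` with `s = (1-α) Φ(n)` and `t = ε / (1-α)`.
Since `q (1-α) < (1-α) p` and `α (1-p) < (1-α) p`, eventually `s ≤ 1`, and then convexity of
`x ↦ x^n` at the point `(1-s)·1 + s·t` gives `(1 - s (1-t))^n ≤ 1 - s (1 - t^n)`, that is
`h̲_n(ε) ≥ 1 - ((1-α) - ε) Φ(n)`.

For a memoryless filter `W` both guessing probabilities tensorize:
`P_c(X^n|Z^n) = P_c(X|Z)^n` and `P_c(Y^n|Z^n) = P_c(Y|Z)^n`, so `h_n^i(ε)` is bounded by the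
single-letter inequality `P_c(Y|Z) ≤ 1 - ((1-α) - P_c(X|Z)) Φ(1)`, a linear inequality in the
two crossover probabilities of `W` once the maxima are resolved.

Both bounds need `ε ≥ p`. This is forced by the closed form itself: `P_c(X^n|Z^n) ≥ p^n` for
every filter, so `h̲_n` vanishes below `p`, whereas the closed form is strictly increasing.
-/

open Finset

/-- `bern p b = p` if `b = true`, and `1 - p` otherwise. -/
noncomputable def bern (p : ℝ) (b : Bool) : ℝ := if b then p else 1 - p

/-- Joint pmf of `(X^n, Y^n)` where `X_1,…,X_n` are i.i.d. `Bernoulli(p)` and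
`Y_k = X_k ⊕ V_k` with `V_1,…,V_n` i.i.d. `Bernoulli(α)` independent of `X^n`. -/
noncomputable def jointIID (n : ℕ) (p α : ℝ) :
    (Fin n → Bool) → (Fin n → Bool) → ℝ :=
  fun x y => ∏ k, bern p (x k) * bern α (xor (x k) (y k))

/-- `F` is a channel (row-stochastic matrix) on a finite alphabet. -/
def IsChannel {V : Type*} [Fintype V] (F : V → V → ℝ) : Prop :=
  (∀ y z, 0 ≤ F y z) ∧ ∀ y, ∑ z, F y z = 1

/-- `P_c(X|Z)` where `Z` is the output of the channel `F` applied to `Y` and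
`X – Y – Z` is a Markov chain, for joint pmf `P` of `(X,Y)`. -/
noncomputable def pcXZ {X V : Type*} [Fintype X] [Fintype V] [Nonempty X]
    (P : X → V → ℝ) (F : V → V → ℝ) : ℝ :=
  ∑ z, ⨆ x, ∑ y, P x y * F y z

/-- `P_c(Y|Z)` where `Z` is the output of the channel `F` applied to `Y`. -/
noncomputable def pcYZ {X V : Type*} [Fintype X] [Fintype V] [Nonempty V]
    (P : X → V → ℝ) (F : V → V → ℝ) : ℝ :=
  ∑ z, ⨆ y, (∑ x, P x y) * F y z

/-- The Z-channel from `y0` to `z0` with crossover probability `ζ`: every `y ≠ y0` is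
mapped to itself with probability `1`, while `y0` is mapped to `z0` with probability
`ζ` and to itself with probability `1 − ζ`. -/
noncomputable def Zch {V : Type*} [DecidableEq V] (y0 z0 : V) (ζ : ℝ) : V → V → ℝ :=
  fun y z =>
    if y = y0 then (if z = z0 then ζ else if z = y0 then 1 - ζ else 0)
    else (if z = y then 1 else 0)

/-- The memoryless privacy filter built from a single binary-input binary-output
channel `W`. -/
noncomputable def memless (n : ℕ) (W : Bool → Bool → ℝ) :
    (Fin n → Bool) → (Fin n → Bool) → ℝ :=
  fun y z => ∏ k, W (y k) (z k)

/-- `h_n^i(ε)`: the best normalized guessing probability `P_c(Y^n|Z^n)^{1/n}` over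
memoryless privacy filters satisfying `P_c(X^n|Z^n)^{1/n} ≤ ε`. -/
noncomputable def hMemless (n : ℕ) (p α : ℝ) (ε : ℝ) : ℝ :=
  sSup {u | ∃ W : Bool → Bool → ℝ, (∀ y z, 0 ≤ W y z) ∧ (∀ y, ∑ z, W y z = 1) ∧
    pcXZ (jointIID n p α) (memless n W) ^ ((n : ℝ)⁻¹) ≤ ε ∧
    u = pcYZ (jointIID n p α) (memless n W) ^ ((n : ℝ)⁻¹)}

/-- `h̲_n(ε)`: the best normalized guessing probability `P_c(Y^n|Z^n)^{1/n}` over all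
channels with output alphabet `{0,1}^n` satisfying `P_c(X^n|Z^n)^{1/n} ≤ ε`. -/
noncomputable def hUnderN (n : ℕ) (p α : ℝ) (ε : ℝ) : ℝ :=
  sSup {u | ∃ F : (Fin n → Bool) → (Fin n → Bool) → ℝ, IsChannel F ∧
    pcXZ (jointIID n p α) F ^ ((n : ℝ)⁻¹) ≤ ε ∧
    u = pcYZ (jointIID n p α) F ^ ((n : ℝ)⁻¹)}

/-- `Φ(m) = q^m (1−α)^{m−1} / (((1−α)p)^m − (α(1−p))^m)`. -/
noncomputable def Phi (p α : ℝ) (m : ℕ) : ℝ :=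
  (α * (1 - p) + (1 - α) * p) ^ m * (1 - α) ^ (m - 1) /
    (((1 - α) * p) ^ m - (α * (1 - p)) ^ m)

open Filter

noncomputable def jointSingle (p α : ℝ) : Bool → Bool → ℝ :=
  fun x y => bern p x * bern α (xor x y)

/-- `1 − ζ_n(ε) q^n`, the closed form of `h̲_n(ε)^n`. -/
noncomputable def hUnderNFormula (n : ℕ) (p α ε : ℝ) : ℝ :=
  1 - ((1 - α) ^ n - ε ^ n) / (((1 - α) * p) ^ n - (α * (1 - p)) ^ n) *
    (α * (1 - p) + (1 - α) * p) ^ n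

theorem ciSup_bool (f : Bool → ℝ) : ⨆ b, f b = max (f false) (f true) :=
  le_antisymm (ciSup_le fun b => by cases b <;> simp)
    (max_le (Finite.le_ciSup f false) (Finite.le_ciSup f true))

theorem eventually_pow_add_pow_le_pow {a b c : ℝ} (ha : 0 ≤ a) (hb : 0 ≤ b) (hac : a < c)
    (hbc : b < c) : ∀ᶠ n : ℕ in atTop, a ^ n + b ^ n ≤ c ^ n := by
  have hc : 0 < c := ha.trans_lt hac
  have hlim : Tendsto (fun n : ℕ => (a / c) ^ n + (b / c) ^ n) atTop (nhds 0) := by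
    simpa using (tendsto_pow_atTop_nhds_zero_of_lt_one (div_nonneg ha hc.le)
      ((div_lt_one hc).2 hac)).add
      (tendsto_pow_atTop_nhds_zero_of_lt_one (div_nonneg hb hc.le) ((div_lt_one hc).2 hbc))
  filter_upwards [hlim.eventually (eventually_le_nhds zero_lt_one)] with n hn
  rwa [div_pow, div_pow, ← add_div, div_le_one (pow_pos hc n)] at hn

theorem one_sub_mul_one_sub_pow_le {s t : ℝ} (hs0 : 0 ≤ s) (hs1 : s ≤ 1) (ht : 0 ≤ t) (n : ℕ) :
    (1 - s * (1 - t)) ^ n ≤ 1 - s * (1 - t ^ n) := by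
  have h := (convexOn_pow n).2 (Set.mem_Ici.2 zero_le_one) (Set.mem_Ici.2 ht)
    (sub_nonneg.2 hs1) hs0 (sub_add_cancel 1 s)
  simp only [smul_eq_mul, one_pow, mul_one] at h
  rw [show 1 - s * (1 - t) = 1 - s + s * t by ring]
  linarith

section GuessingProbability

variable {X V : Type*} [Fintype X] [Fintype V]

theorem pcXZ_nonneg [Nonempty X] {P : X → V → ℝ} {F : V → V → ℝ} (hP : ∀ x y, 0 ≤ P x y)
    (hF : ∀ y z, 0 ≤ F y z) : 0 ≤ pcXZ P F :=
  sum_nonneg fun z _ => Finite.le_ciSup_of_le (Classical.arbitrary X)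
    (sum_nonneg fun y _ => mul_nonneg (hP _ y) (hF y z))

theorem pcYZ_nonneg [Nonempty V] {P : X → V → ℝ} {F : V → V → ℝ} (hP : ∀ x y, 0 ≤ P x y)
    (hF : ∀ y z, 0 ≤ F y z) : 0 ≤ pcYZ P F :=
  sum_nonneg fun z _ => Finite.le_ciSup_of_le (Classical.arbitrary V)
    (mul_nonneg (sum_nonneg fun x _ => hP x _) (hF _ z))

theorem sum_le_pcXZ [Nonempty X] (P : X → V → ℝ) {F : V → V → ℝ} (hF : ∀ y, ∑ z, F y z = 1)
    (x₀ : X) : ∑ y, P x₀ y ≤ pcXZ P F :=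
  calc ∑ y, P x₀ y = ∑ z, ∑ y, P x₀ y * F y z := by
        rw [sum_comm]; simp only [← mul_sum, hF, mul_one]
    _ ≤ pcXZ P F := sum_le_sum fun z _ =>
        Finite.le_ciSup (fun x => ∑ y, P x y * F y z) x₀

end GuessingProbability

section Tensorization

variable {A B : Type*} [Fintype A] [Fintype B]

theorem sum_ciSup_prod_pi_eq_pow [Nonempty A] (g : A → B → ℝ) (hg : ∀ a b, 0 ≤ g a b) (n : ℕ) :
    ∑ z : Fin n → B, ⨆ x : Fin n → A, ∏ k, g (x k) (z k) = (∑ b, ⨆ a, g a b) ^ n := by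
  classical
  have hsup : ∀ z : Fin n → B, ⨆ x : Fin n → A, ∏ k, g (x k) (z k) = ∏ k, ⨆ a, g a (z k) :=
    fun z => Real.iSup_prod_eq_prod_iSup_of_nonneg fun k a => hg a (z k)
  simp_rw [hsup]
  rw [← Fintype.prod_sum (fun _ : Fin n => fun b => ⨆ a, g a b), prod_const, card_univ,
    Fintype.card_fin]

variable (n : ℕ) (P : A → Bool → ℝ) (W : Bool → Bool → ℝ)

theorem pcXZ_pi_memless [Nonempty A] (hP : ∀ a b, 0 ≤ P a b) (hW : ∀ b c, 0 ≤ W b c) :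
    pcXZ (fun x y : Fin n → _ => ∏ k, P (x k) (y k)) (memless n W) = pcXZ P W ^ n := by
  classical
  have hfactor : ∀ (x : Fin n → A) (z : Fin n → Bool),
      ∑ y, (∏ k, P (x k) (y k)) * memless n W y z = ∏ k, ∑ b, P (x k) b * W b (z k) := by
    intro x z
    rw [Fintype.prod_sum]
    exact sum_congr rfl fun y _ => prod_mul_distrib.symm
  simp_rw [pcXZ, hfactor]
  exact sum_ciSup_prod_pi_eq_pow _ (fun a c => sum_nonneg fun b _ => mul_nonneg (hP a b) (hW b c)) n

theorem pcYZ_pi_memless (hP : ∀ a b, 0 ≤ P a b) (hW : ∀ b c, 0 ≤ W b c) :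
    pcYZ (fun x y : Fin n → _ => ∏ k, P (x k) (y k)) (memless n W) = pcYZ P W ^ n := by
  classical
  have hfactor : ∀ y z : Fin n → Bool,
      (∑ x : Fin n → A, ∏ k, P (x k) (y k)) * memless n W y z =
        ∏ k, (∑ a, P a (y k)) * W (y k) (z k) := by
    intro y z
    rw [memless, prod_mul_distrib, Fintype.prod_sum]
  simp_rw [pcYZ, hfactor]
  exact sum_ciSup_prod_pi_eq_pow _
    (fun b c => mul_nonneg (sum_nonneg fun a _ => hP a b) (hW b c)) n

end Tensorization

section Phi

variable {p α : ℝ}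

theorem Phi_one (p α : ℝ) : Phi p α 1 = (α * (1 - p) + (1 - α) * p) / (p - α) := by
  simp only [Phi, pow_one, Nat.sub_self, pow_zero, mul_one]
  ring_nf

theorem Phi_nonneg (n : ℕ) (hp0 : 0 ≤ p) (hp1 : p ≤ 1) (hα0 : 0 ≤ α) (hαp : α ≤ p) :
    0 ≤ Phi p α n := by
  have hD : (α * (1 - p)) ^ n ≤ ((1 - α) * p) ^ n :=
    pow_le_pow_left₀ (mul_nonneg hα0 (by linarith)) (by nlinarith) n
  have hq : 0 ≤ α * (1 - p) + (1 - α) * p := by nlinarith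
  exact div_nonneg (mul_nonneg (pow_nonneg hq n) (pow_nonneg (by linarith) _)) (sub_nonneg.2 hD)

theorem eventually_mul_Phi_le_one (hp : 1 / 2 < p) (hp1 : p ≤ 1) (hα0 : 0 < α) (hαp : α < p) :
    ∀ᶠ n : ℕ in atTop, (1 - α) * Phi p α n ≤ 1 := by
  have h1α : 0 < 1 - α := by linarith
  have hq : 0 < α * (1 - p) + (1 - α) * p := by nlinarith
  have hqp : (α * (1 - p) + (1 - α) * p) * (1 - α) < (1 - α) * p := by
    nlinarith [mul_pos (mul_pos h1α hα0) (by linarith : (0 : ℝ) < 2 * p - 1)]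
  filter_upwards [eventually_pow_add_pow_le_pow (b := α * (1 - p)) (mul_pos hq h1α).le
    (mul_nonneg hα0.le (by linarith)) hqp (by nlinarith), eventually_ne_atTop 0]
    with n hn hn0
  have hD : 0 < ((1 - α) * p) ^ n - (α * (1 - p)) ^ n := by
    linarith [pow_pos (mul_pos hq h1α) n]
  have hnum : (1 - α) * ((α * (1 - p) + (1 - α) * p) ^ n * (1 - α) ^ (n - 1)) =
      ((α * (1 - p) + (1 - α) * p) * (1 - α)) ^ n := by
    rw [mul_pow, mul_left_comm, ← pow_succ', Nat.sub_add_cancel (Nat.one_le_iff_ne_zero.2 hn0)]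
  rw [Phi, mul_div_assoc', hnum, div_le_one hD]
  linarith

end Phi

section ClosedForm

variable {n : ℕ} {p α : ℝ}

theorem hUnderNFormula_eq (hn : n ≠ 0) (hα : α ≠ 1) (ε : ℝ) :
    hUnderNFormula n p α ε = 1 - (1 - α) * Phi p α n * (1 - (ε / (1 - α)) ^ n) := by
  have h1α : 1 - α ≠ 0 := sub_ne_zero.2 hα.symm
  obtain ⟨m, rfl⟩ := Nat.exists_eq_add_one_of_ne_zero hn
  rw [hUnderNFormula, Phi, Nat.add_sub_cancel, div_pow]
  field_simp
  ring

theorem hUnderNFormula_strictMonoOn (hn : n ≠ 0)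
    (hD : 0 < ((1 - α) * p) ^ n - (α * (1 - p)) ^ n) (hq : 0 < α * (1 - p) + (1 - α) * p) :
    StrictMonoOn (hUnderNFormula n p α) (Set.Ici 0) := by
  intro x hx y hy hxy
  have := pow_lt_pow_left₀ hxy hx hn
  simp only [hUnderNFormula]
  gcongr

theorem one_sub_mul_Phi_le_of_pow_eq (hn : n ≠ 0) {ε u : ℝ} (hα : α < 1)
    (hΦ0 : 0 ≤ Phi p α n) (hΦ1 : (1 - α) * Phi p α n ≤ 1) (hε : 0 ≤ ε) (hu : 0 ≤ u)
    (hun : u ^ n = hUnderNFormula n p α ε) : 1 - ((1 - α) - ε) * Phi p α n ≤ u := by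
  have h1α : 0 < 1 - α := sub_pos.2 hα
  have ht : 0 ≤ ε / (1 - α) := div_nonneg hε h1α.le
  have hs : 0 ≤ (1 - α) * Phi p α n := mul_nonneg h1α.le hΦ0
  have hsplit : ((1 - α) - ε) * Phi p α n = (1 - α) * Phi p α n * (1 - ε / (1 - α)) := by
    field_simp
  rw [hsplit]
  have hc : 0 ≤ 1 - (1 - α) * Phi p α n * (1 - ε / (1 - α)) := by nlinarith
  refine (pow_le_pow_iff_left₀ hc hu hn).1 ?_
  rw [hun, hUnderNFormula_eq hn hα.ne]
  exact one_sub_mul_one_sub_pow_le hs hΦ1 ht n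

end ClosedForm

section BinarySymmetric

variable {p α : ℝ}

theorem bern_nonneg (hp0 : 0 ≤ p) (hp1 : p ≤ 1) (b : Bool) : 0 ≤ bern p b := by
  cases b <;> simp [bern, hp0, hp1]

theorem jointSingle_nonneg (hp0 : 0 ≤ p) (hp1 : p ≤ 1) (hα0 : 0 ≤ α) (hα1 : α ≤ 1) (x y : Bool) :
    0 ≤ jointSingle p α x y :=
  mul_nonneg (bern_nonneg hp0 hp1 x) (bern_nonneg hα0 hα1 _)

theorem jointIID_nonneg (n : ℕ) (hp0 : 0 ≤ p) (hp1 : p ≤ 1) (hα0 : 0 ≤ α) (hα1 : α ≤ 1)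
    (x y : Fin n → Bool) : 0 ≤ jointIID n p α x y :=
  prod_nonneg fun k _ => jointSingle_nonneg hp0 hp1 hα0 hα1 (x k) (y k)

theorem jointIID_eq_pi (n : ℕ) :
    jointIID n p α = fun x y => ∏ k, jointSingle p α (x k) (y k) := rfl

theorem pow_le_pcXZ_jointIID (n : ℕ) {F : (Fin n → Bool) → (Fin n → Bool) → ℝ}
    (hF : ∀ y, ∑ z, F y z = 1) : p ^ n ≤ pcXZ (jointIID n p α) F := by
  classical
  have hrow : ∑ y, jointIID n p α (fun _ => true) y = p ^ n := by
    change ∑ y : Fin n → Bool, ∏ k, jointSingle p α true (y k) = p ^ n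
    rw [← Fintype.prod_sum fun _ => jointSingle p α true]
    simp [jointSingle, bern, ← mul_add]
  exact hrow ▸ sum_le_pcXZ _ hF _

theorem hUnderN_nonneg (n : ℕ) (hp0 : 0 ≤ p) (hp1 : p ≤ 1) (hα0 : 0 ≤ α) (hα1 : α ≤ 1) (ε : ℝ) :
    0 ≤ hUnderN n p α ε :=
  Real.sSup_nonneg <| by
    rintro u ⟨F, hF, -, rfl⟩
    exact Real.rpow_nonneg (pcYZ_nonneg (jointIID_nonneg n hp0 hp1 hα0 hα1) hF.1) _

theorem hUnderN_eq_zero_of_lt {n : ℕ} (hn : n ≠ 0) (hp : 0 ≤ p) {ε : ℝ} (hε : ε < p) :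
    hUnderN n p α ε = 0 := by
  unfold hUnderN
  convert Real.sSup_empty
  refine Set.eq_empty_iff_forall_notMem.2 ?_
  rintro u ⟨F, hF, hle, -⟩
  have h := Real.rpow_le_rpow (pow_nonneg hp n) (pow_le_pcXZ_jointIID (α := α) n hF.2)
    (inv_nonneg.2 n.cast_nonneg)
  rw [Real.pow_rpow_inv_natCast hp hn] at h
  linarith

theorem pcYZ_jointSingle_le (hp : 1 / 2 ≤ p) (hp1 : p ≤ 1) (hα0 : 0 ≤ α) (hαp : α < p)
    {W : Bool → Bool → ℝ} (hW : IsChannel W) :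
    pcYZ (jointSingle p α) W ≤ 1 - ((1 - α) - pcXZ (jointSingle p α) W) * Phi p α 1 := by
  obtain ⟨hW0, hW1⟩ := hW
  have hWf : W false false = 1 - W false true := by linarith [hW1 false, Fintype.sum_bool (W false)]
  have hWt : W true true = 1 - W true false := by linarith [hW1 true, Fintype.sum_bool (W true)]
  have ha0 : 0 ≤ W false true := hW0 false true
  have hb0 : 0 ≤ W true false := hW0 true false
  have ha1 : 0 ≤ 1 - W false true := hWf ▸ hW0 false false
  have hb1 : 0 ≤ 1 - W true false := hWt ▸ hW0 true true
  set a := W false true with ha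
  set b := W true false with hb
  clear_value a b
  have hX : pcXZ (jointSingle p α) W =
      max ((1 - p) * α * (1 - b) + (1 - p) * (1 - α) * a) (p * (1 - α) * (1 - b) + p * α * a) +
        max ((1 - p) * α * b + (1 - p) * (1 - α) * (1 - a))
          (p * (1 - α) * b + p * α * (1 - a)) := by
    simp only [pcXZ, ciSup_bool, Fintype.sum_bool, jointSingle, bern, hWf, hWt, Bool.xor_false,
      Bool.xor_true, Bool.not_true, Bool.not_false, ↓reduceIte, Bool.false_eq_true, ← ha, ← hb]
  have hY : pcYZ (jointSingle p α) W =
      max ((1 - (α * (1 - p) + (1 - α) * p)) * a) ((α * (1 - p) + (1 - α) * p) * (1 - b)) +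
        max ((1 - (α * (1 - p) + (1 - α) * p)) * (1 - a)) ((α * (1 - p) + (1 - α) * p) * b) := by
    simp only [pcYZ, ciSup_bool, Fintype.sum_bool, jointSingle, bern, hWf, hWt, Bool.xor_false,
      Bool.xor_true, Bool.not_true, Bool.not_false, ↓reduceIte, Bool.false_eq_true, ← ha, ← hb]
    ring_nf
  set q := α * (1 - p) + (1 - α) * p
  have hq : 0 ≤ q :=
    add_nonneg (mul_nonneg hα0 (by linarith)) (mul_nonneg (by linarith) (by linarith))
  have hc : 0 ≤ α * (1 - α) * (2 * p - 1) :=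
    mul_nonneg (mul_nonneg hα0 (by linarith)) (by linarith)
  suffices key : (p - α) * pcYZ (jointSingle p α) W + ((1 - α) - pcXZ (jointSingle p α) W) * q ≤
      p - α by
    rw [Phi_one, ← mul_div_assoc, le_sub_comm, div_le_iff₀ (sub_pos.2 hαp)]
    linarith
  rw [hX, hY]
  set X₁ := max ((1 - p) * α * (1 - b) + (1 - p) * (1 - α) * a) (p * (1 - α) * (1 - b) + p * α * a)
  set X₀ := max ((1 - p) * α * b + (1 - p) * (1 - α) * (1 - a)) (p * (1 - α) * b + p * α * (1 - a))
  -- Whichever terms realise the two maxima in `P_c(Y|Z)`, the bound is a nonnegative combination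
  -- of guesses `x` in `P_c(X|Z)` and of `α(1-α)(2p-1)` times `a`, `1 - a`, `b` or `1 - b`.
  have h₁ := mul_le_mul_of_nonneg_left (le_max_left _ _ : _ ≤ X₁) hq
  have h₁' := mul_le_mul_of_nonneg_left (le_max_right _ _ : _ ≤ X₁) hq
  have h₀ := mul_le_mul_of_nonneg_left (le_max_left _ _ : _ ≤ X₀) hq
  have h₀' := mul_le_mul_of_nonneg_left (le_max_right _ _ : _ ≤ X₀) hq
  rcases max_cases ((1 - q) * a) (q * (1 - b)) with ⟨e1, -⟩ | ⟨e1, -⟩ <;>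
    rcases max_cases ((1 - q) * (1 - a)) (q * b) with ⟨e2, -⟩ | ⟨e2, -⟩ <;>
    rw [e1, e2] <;>
    linarith [mul_nonneg hc ha0, mul_nonneg hc ha1, mul_nonneg hc hb0, mul_nonneg hc hb1]

end BinarySymmetric

theorem le_of_hUnderN_pow_eq_hUnderNFormula {n : ℕ} (hn : n ≠ 0) {p α εL : ℝ} (hp : 0 < p)
    (hα0 : 0 ≤ α) (hαp : α < p) (hpα : p < 1 - α)
    (hform : ∀ ε ∈ Set.Icc εL (1 - α), hUnderN n p α ε ^ n = hUnderNFormula n p α ε) :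
    p ≤ εL := by
  by_contra! h
  have hD : 0 < ((1 - α) * p) ^ n - (α * (1 - p)) ^ n :=
    sub_pos.2 (pow_lt_pow_left₀ (by linarith [show (1 - α) * p - α * (1 - p) = p - α by ring])
      (mul_nonneg hα0 (by linarith)) hn)
  have hq : 0 < α * (1 - p) + (1 - α) * p := by nlinarith
  have hvanish : ∀ ε ∈ Set.Ico (max εL 0) p, hUnderNFormula n p α ε = 0 := fun ε hε => by
    rw [← hform ε ⟨(le_max_left _ _).trans hε.1, by linarith [hε.2]⟩,
      hUnderN_eq_zero_of_lt hn hp.le hε.2, zero_pow hn]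
  have hε₁ : max εL 0 < p := max_lt h hp
  have hlt := hUnderNFormula_strictMonoOn hn hD hq (Set.mem_Ici.2 (le_max_right εL 0))
    (Set.mem_Ici.2 (by linarith [le_max_right εL 0] : (0 : ℝ) ≤ (max εL 0 + p) / 2))
    (by linarith : max εL 0 < (max εL 0 + p) / 2)
  rw [hvanish _ ⟨le_rfl, hε₁⟩, hvanish _ ⟨by linarith, by linarith⟩] at hlt
  exact hlt.false

theorem hMemless_le {n : ℕ} (hn : n ≠ 0) {p α ε : ℝ} (hp : 1 / 2 ≤ p) (hp1 : p ≤ 1)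
    (hα0 : 0 ≤ α) (hαp : α < p) (hpε : p ≤ ε) :
    hMemless n p α ε ≤ 1 - ((1 - α) - ε) * Phi p α 1 := by
  have hα1 : α ≤ 1 := by linarith
  have hP := jointSingle_nonneg (by linarith) hp1 hα0 hα1
  have hq : 0 ≤ α * (1 - p) + (1 - α) * p := by nlinarith
  have hΦ : 0 ≤ Phi p α 1 := by rw [Phi_one]; exact div_nonneg hq (by linarith)
  refine Real.sSup_le ?_ ?_
  · rintro u ⟨W, hW0, hW1, hX, rfl⟩
    rw [jointIID_eq_pi, pcXZ_pi_memless n _ W hP hW0,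
      Real.pow_rpow_inv_natCast (pcXZ_nonneg hP hW0) hn] at hX
    rw [jointIID_eq_pi, pcYZ_pi_memless n _ W hP hW0,
      Real.pow_rpow_inv_natCast (pcYZ_nonneg hP hW0) hn]
    calc pcYZ (jointSingle p α) W
        ≤ 1 - ((1 - α) - pcXZ (jointSingle p α) W) * Phi p α 1 :=
          pcYZ_jointSingle_le hp hp1 hα0 hαp ⟨hW0, hW1⟩
      _ ≤ 1 - ((1 - α) - ε) * Phi p α 1 := by gcongr
  · have hq1 : α * (1 - p) + (1 - α) * p ≤ 1 := by nlinarith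
    rw [Phi_one, ← mul_div_assoc, sub_nonneg, div_le_one (by linarith)]
    rcases le_or_gt ((1 - α) - ε) 0 with h | h <;> nlinarith

/-- Corollary 3, case `p > 1/2`, `α > 0`: the gap between the
optimal and the optimal memoryless filter is lower bounded by
`((1−α) − ε)(Φ(1) − Φ(n))` for all sufficiently large `n`, where `ε_L n` is as in
Theorem 4 (i.e., the closed-form formula for `h̲_n` holds on `[ε_L n, 1−α]`). -/
theorem gap_lower_bound (p α : ℝ)
    (hp : p ∈ Set.Ioo (1 / 2 : ℝ) 1) (hα : α ∈ Set.Ioo (0 : ℝ) (1 / 2))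
    (hpα : p < 1 - α) (εL : ℕ → ℝ)
    (hεL : ∀ n, 0 < n → εL n < 1 - α ∧
      ∀ ε ∈ Set.Icc (εL n) (1 - α),
        hUnderN n p α ε ^ n =
          1 - ((1 - α) ^ n - ε ^ n) / (((1 - α) * p) ^ n - (α * (1 - p)) ^ n) *
            (α * (1 - p) + (1 - α) * p) ^ n) :
    ∃ N0 : ℕ, ∀ n ≥ N0, ∀ ε ∈ Set.Icc (εL n) (1 - α),
      ((1 - α) - ε) * (Phi p α 1 - Phi p α n) ≤
        hUnderN n p α ε - hMemless n p α ε := by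
  obtain ⟨hp, hp1⟩ := hp
  obtain ⟨hα0, hα1⟩ := hα
  have hαp : α < p := by linarith
  obtain ⟨N, hN⟩ := eventually_atTop.1 ((eventually_mul_Phi_le_one hp hp1.le hα0 hαp).and
    (eventually_ne_atTop 0))
  refine ⟨N, fun n hn ε hε => ?_⟩
  obtain ⟨hΦ, hn0⟩ := hN n hn
  obtain ⟨-, hform⟩ := hεL n (Nat.pos_of_ne_zero hn0)
  have hpε : p ≤ ε :=
    (le_of_hUnderN_pow_eq_hUnderNFormula hn0 (by linarith) hα0.le hαp hpα hform).trans hε.1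
  have hlower : 1 - ((1 - α) - ε) * Phi p α n ≤ hUnderN n p α ε :=
    one_sub_mul_Phi_le_of_pow_eq hn0 (by linarith)
      (Phi_nonneg n (by linarith) hp1.le hα0.le hαp.le) hΦ (by linarith)
      (hUnderN_nonneg n (by linarith) hp1.le hα0.le (by linarith) ε) (hform ε hε)
  have hupper := hMemless_le hn0 hp.le hp1.le hα0.le hαp hpε
  linarith
end

section
/- Let n be odd, θ ~ Bernoulli(p) with p ∈ [1/2, 1), and let Y_1,…,Y_n be conditionally i.i.d. given θ with Pr(Y_k = 1 | θ = 1) = 1−α and Pr(Y_k = 1 | θ = 0) = α, where α ∈ (0, 1/2), (1−α)(1−p) > αp, and p < P_c(θ|Y^n). Then P_c(θ|Y^n) = (1−α)^n Σ_{k=0}^{(n−1)/2} C(n,k)(α/(1−α))^k =: T, and there exists ε_L < T such that for every ε ∈ [ε_L, T]: max{P_c(Y^n|Z^n) : P_{Z^n|Y^n} a channel with output alphabet {0,1}^n, θ–Y^n–Z^n a Markov chain, P_c(θ|Z^n) ≤ ε} = 1 − ζ(ε)·(p(1−α)^n + (1−p)α^n), where ζ(ε) := (T − ε)/(p(1−α)^n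 − (1−p)α^n). Moreover, the maximum is attained by the 2^n-ary Z-channel that maps every y^n ≠ (1,…,1) to itself with probability 1 and maps (1,…,1) to (0,…,0) with probability ζ(ε) and to (1,…,1) with probability 1 − ζ(ε). -/
open Finset

/-- Joint pmf of `(θ, Y^n)` where `θ ~ Bernoulli(p)` and, given `θ`, the `Y_k` are
i.i.d. with `Pr(Y_k = 1 | θ = 1) = 1 − α` and `Pr(Y_k = 1 | θ = 0) = α`. -/
noncomputable def jointTheta (n : ℕ) (p α : ℝ) : Bool → (Fin n → Bool) → ℝ :=
  fun t y => bern p t * ∏ k, bern (if t then 1 - α else α) (y k)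

/-!
Write `c = P(Yⁿ = 1⋯1)` and `d = P(θ = 1, Yⁿ = 1⋯1) − P(θ = 0, Yⁿ = 1⋯1)`. Over all outputs `y`
the posterior gap `|P(1, y) − P(0, y)| / P(y)` is largest at `y = 1⋯1`, where it equals `d / c`.
For any channel, estimate each output column `z` by guessing the value of `θ` that is optimal at
the most likely input behind `z`: this input then costs nothing, and every other input `y` costs
at most `(d / c) P(y, z)`, so `c (P_c(θ|Yⁿ) − P_c(θ|Zⁿ)) ≤ d (1 − P_c(Yⁿ|Zⁿ))`. The Z-channel
moving `1⋯1` to `0⋯0` with probability `ζ` attains equality as long as the MAP guesses at `1⋯1`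
and `0⋯0` stay `1` and `0`. Finally `P_c(θ|Yⁿ)` comes from the MAP rule `θ̂ = 1 ⇔ weight(y) > m`
for `n = 2m + 1` and the symmetry `k ↦ n − k` of the binomial coefficients.
-/
lemma ciSup_eq_of_forall_le {ι α : Type*} [Nonempty ι] [ConditionallyCompleteLattice α]
    {f : ι → α} {i : ι} (h : ∀ j, f j ≤ f i) : ⨆ j, f j = f i :=
  ciSup_eq_of_forall_le_of_forall_lt_exists_gt h fun _ hw => ⟨i, hw⟩

lemma sum_ite_eq_ite_eq {V M : Type*} [Fintype V] [DecidableEq V] [AddCommGroup M]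
    {a b : V} (hab : a ≠ b) (A B : M) (C : V → M) :
    ∑ z, (if z = a then A else if z = b then B else C z) = ∑ z, C z + (A - C a) + (B - C b) := by
  have hsplit : ∀ z, (if z = a then A else if z = b then B else C z) =
      C z + (if z = a then A - C a else 0) + (if z = b then B - C b else 0) := by
    intro z
    split_ifs <;> simp_all
  simp [hsplit, Finset.sum_add_distrib]

lemma ciSup_bool_eq_max {α : Type*} [ConditionallyCompleteLinearOrder α] (f : Bool → α) :
    ⨆ t, f t = max (f true) (f false) :=
  le_antisymm (ciSup_le <| Bool.forall_bool.2 ⟨le_max_right _ _, le_max_left _ _⟩)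
    (max_le (le_ciSup (Set.finite_range f).bddAbove true)
      (le_ciSup (Set.finite_range f).bddAbove false))

section Channels

variable {X V : Type*} [Fintype X] [Fintype V]

lemma sum_sum_mul_of_isChannel {F : V → V → ℝ} (hF : IsChannel F) (g : V → ℝ) :
    ∑ z, ∑ y, g y * F y z = ∑ y, g y := by
  rw [Finset.sum_comm]
  exact Finset.sum_congr rfl fun y _ => by rw [← Finset.mul_sum, hF.2 y, mul_one]

variable [Nonempty X] [Nonempty V]

/-- Guess, for the whole column `f`, the `x` that is optimal at its most likely input `yStar`;
the term of `yStar` then vanishes. -/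
lemma mul_sub_iSup_le_of_gap {P : X → V → ℝ} {c d : ℝ} (hc : 0 ≤ c)
    (hgap : ∀ x x' y, c * (P x y - P x' y) ≤ d * ∑ x'', P x'' y)
    {f : V → ℝ} (hf : ∀ y, 0 ≤ f y) :
    c * (∑ y, (⨆ x, P x y) * f y - ⨆ x, ∑ y, P x y * f y)
      ≤ d * (∑ y, (∑ x, P x y) * f y - ⨆ y, (∑ x, P x y) * f y) := by
  classical
  obtain ⟨yStar, hyStar⟩ := exists_eq_ciSup_of_finite (f := fun y => (∑ x, P x y) * f y)
  obtain ⟨xStar, hxStar⟩ := exists_eq_ciSup_of_finite (f := fun x => P x yStar)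
  have hle : ∀ y, c * ((⨆ x, P x y) - P xStar y) * f y ≤ d * ((∑ x, P x y) * f y) := by
    intro y
    obtain ⟨x, hx⟩ := exists_eq_ciSup_of_finite (f := fun x => P x y)
    rw [← hx, ← mul_assoc]
    exact mul_le_mul_of_nonneg_right (hgap x xStar y) (hf y)
  have hzero : c * ((⨆ x, P x yStar) - P xStar yStar) * f yStar = 0 := by
    rw [← hxStar, sub_self, mul_zero, zero_mul]
  calc c * (∑ y, (⨆ x, P x y) * f y - ⨆ x, ∑ y, P x y * f y)
      ≤ c * (∑ y, (⨆ x, P x y) * f y - ∑ y, P xStar y * f y) := by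
        gcongr
        exact le_ciSup (Set.finite_range fun x => ∑ y, P x y * f y).bddAbove xStar
    _ = ∑ y ∈ univ.erase yStar, c * ((⨆ x, P x y) - P xStar y) * f y := by
        rw [Finset.sum_erase univ (f := fun y => c * ((⨆ x, P x y) - P xStar y) * f y) hzero,
          ← Finset.sum_sub_distrib, Finset.mul_sum]
        exact Finset.sum_congr rfl fun y _ => by ring
    _ ≤ ∑ y ∈ univ.erase yStar, d * ((∑ x, P x y) * f y) :=
        Finset.sum_le_sum fun y _ => hle y
    _ = d * (∑ y, (∑ x, P x y) * f y - ⨆ y, (∑ x, P x y) * f y) := by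
        rw [Finset.sum_erase_eq_sub (mem_univ yStar), ← hyStar, mul_sub, Finset.mul_sum]

theorem mul_sub_pcXZ_le_mul_sub_pcYZ {P : X → V → ℝ} {F : V → V → ℝ} (hF : IsChannel F)
    {c d : ℝ} (hc : 0 ≤ c) (hgap : ∀ x x' y, c * (P x y - P x' y) ≤ d * ∑ x'', P x'' y) :
    c * ((∑ y, ⨆ x, P x y) - pcXZ P F) ≤ d * ((∑ y, ∑ x, P x y) - pcYZ P F) := by
  calc c * ((∑ y, ⨆ x, P x y) - pcXZ P F)
      = ∑ z, c * (∑ y, (⨆ x, P x y) * F y z - ⨆ x, ∑ y, P x y * F y z) := by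
        rw [← Finset.mul_sum, Finset.sum_sub_distrib, sum_sum_mul_of_isChannel hF]; rfl
    _ ≤ ∑ z, d * (∑ y, (∑ x, P x y) * F y z - ⨆ y, (∑ x, P x y) * F y z) :=
        Finset.sum_le_sum fun z _ => mul_sub_iSup_le_of_gap hc hgap fun y => hF.1 y z
    _ = d * ((∑ y, ∑ x, P x y) - pcYZ P F) := by
        rw [← Finset.mul_sum, Finset.sum_sub_distrib, sum_sum_mul_of_isChannel hF]; rfl

end Channels

section ZChannel

variable {V : Type*} [Fintype V] [DecidableEq V] {y0 z0 : V} {ζ : ℝ}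

lemma isChannel_Zch (h : z0 ≠ y0) (hζ0 : 0 ≤ ζ) (hζ1 : ζ ≤ 1) : IsChannel (Zch y0 z0 ζ) := by
  refine ⟨fun y z => by unfold Zch; split_ifs <;> linarith, fun y => ?_⟩
  by_cases hy : y = y0
  · simp [Zch, hy, sum_ite_eq_ite_eq h]
  · simp [Zch, hy]

lemma sum_mul_Zch (h : z0 ≠ y0) (g : V → ℝ) (z : V) :
    ∑ y, g y * Zch y0 z0 ζ y z =
      if z = z0 then g z0 + ζ * g y0 else if z = y0 then (1 - ζ) * g y0 else g z := by
  have hrest : ∑ y ∈ {y0}ᶜ, g y * Zch y0 z0 ζ y z = if z = y0 then 0 else g z := by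
    have hoff : ∀ y ∈ ({y0}ᶜ : Finset V), g y * Zch y0 z0 ζ y z = if z = y then g y else 0 := by
      intro y hy
      rw [Finset.mem_compl, Finset.mem_singleton] at hy
      simp [Zch, hy]
    simp [Finset.sum_congr rfl hoff, Finset.sum_ite_eq]
  rw [Fintype.sum_eq_add_sum_compl y0, hrest]
  simp only [Zch, if_true]
  split_ifs <;> simp_all <;> ring

variable {X : Type*} [Fintype X]

lemma pcXZ_Zch [Nonempty X] (P : X → V → ℝ) (h : z0 ≠ y0) (hζ1 : ζ ≤ 1) :
    pcXZ P (Zch y0 z0 ζ) = ∑ z, (⨆ x, P x z) + ((⨆ x, P x z0 + ζ * P x y0) - ⨆ x, P x z0)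
      - ζ * ⨆ x, P x y0 := by
  have hcol : ∀ z, (⨆ x, ∑ y, P x y * Zch y0 z0 ζ y z) = if z = z0 then ⨆ x, P x z0 + ζ * P x y0
      else if z = y0 then (1 - ζ) * ⨆ x, P x y0 else ⨆ x, P x z := by
    intro z
    simp only [sum_mul_Zch h, Real.mul_iSup_of_nonneg (sub_nonneg.2 hζ1)]
    split_ifs <;> rfl
  simp only [pcXZ, hcol, sum_ite_eq_ite_eq h]
  ring

lemma pcYZ_Zch [Nonempty V] (P : X → V → ℝ) (h : z0 ≠ y0) (hP : ∀ y, 0 ≤ ∑ x, P x y) (hζ1 : ζ ≤ 1)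
    (hζP : ζ * ∑ x, P x y0 ≤ ∑ x, P x z0) :
    pcYZ P (Zch y0 z0 ζ) = ∑ y, ∑ x, P x y - ζ * ∑ x, P x y0 := by
  have hcol : ∀ z, (⨆ y, (∑ x, P x y) * Zch y0 z0 ζ y z) = if z = z0 then ∑ x, P x z0
      else if z = y0 then (1 - ζ) * ∑ x, P x y0 else ∑ x, P x z := by
    intro z
    have hdiag : (∑ x, P x z) * Zch y0 z0 ζ z z = if z = z0 then ∑ x, P x z0
        else if z = y0 then (1 - ζ) * ∑ x, P x y0 else ∑ x, P x z := by
      unfold Zch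
      split_ifs <;> simp_all [mul_comm]
    rw [← hdiag]
    refine ciSup_eq_of_forall_le fun y => ?_
    rw [hdiag]
    have := hP y
    have := hP z
    unfold Zch
    split_ifs <;> subst_vars <;> first | exact absurd rfl ‹_› | nlinarith
  simp only [pcYZ, hcol, sum_ite_eq_ite_eq h]
  ring

end ZChannel

section Counting

variable {n : ℕ}

def weight (y : Fin n → Bool) : ℕ := #{k | y k}

lemma weight_le (y : Fin n → Bool) : weight y ≤ n :=
  (card_filter_le _ _).trans (card_fin n).le

lemma prod_ite_eq_pow_weight {M : Type*} [CommMonoid M] (y : Fin n → Bool) (a b : M) :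
    ∏ k, (if y k then a else b) = a ^ weight y * b ^ (n - weight y) := by
  have hcard := card_filter_add_card_filter_not (s := (univ : Finset (Fin n))) (fun k => y k)
  rw [card_univ, Fintype.card_fin] at hcard
  rw [Finset.prod_ite, prod_const, prod_const, weight]
  congr 2
  omega

lemma sum_weight {M : Type*} [AddCommMonoid M] (g : ℕ → M) :
    ∑ y : Fin n → Bool, g (weight y) = ∑ k ∈ range (n + 1), n.choose k • g k := by
  let e : (Fin n → Bool) ≃ Finset (Fin n) :=
    { toFun := fun y => {k | y k}
      invFun := fun s k => k ∈ s
      left_inv := fun y => by ext; simp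
      right_inv := fun s => by ext; simp }
  rw [Fintype.sum_equiv e (fun y => g (weight y)) (fun s => g #s) fun _ => rfl, ← powerset_univ,
    Finset.sum_powerset_apply_card, card_univ, Fintype.card_fin]

lemma sum_range_choose_smul_ite {M : Type*} [AddCommMonoid M] (m : ℕ) (f g : ℕ → M) :
    ∑ k ∈ range (2 * m + 1 + 1), (2 * m + 1).choose k • (if k ≤ m then f k else g (2 * m + 1 - k))
      = ∑ k ∈ range (m + 1), (2 * m + 1).choose k • (f k + g k) := by
  have hlow : ∀ k ∈ range (m + 1), (2 * m + 1).choose k •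
      (if k ≤ m then f k else g (2 * m + 1 - k)) = (2 * m + 1).choose k • f k := by
    intro k hk
    rw [if_pos (Nat.lt_succ_iff.1 (mem_range.1 hk))]
  have hhigh : ∑ j ∈ range (m + 1), (2 * m + 1).choose (m + 1 + j) •
      (if m + 1 + j ≤ m then f (m + 1 + j) else g (2 * m + 1 - (m + 1 + j)))
      = ∑ j ∈ range (m + 1), (2 * m + 1).choose j • g j := by
    rw [← Finset.sum_range_reflect _ (m + 1)]
    refine Finset.sum_congr rfl fun j hj => ?_
    have hj := mem_range.1 hj
    rw [if_neg (by omega), ← Nat.choose_symm (by omega)]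
    congr 2 <;> omega
  rw [show 2 * m + 1 + 1 = (m + 1) + (m + 1) by ring, Finset.sum_range_add,
    Finset.sum_congr rfl hlow, hhigh, ← Finset.sum_add_distrib]
  simp only [smul_add]

end Counting

/-- With `r = α / (1 - α)` and `s = n - w`, this compares the posterior gap
`|P(1, y) − P(0, y)| / P(y)` at an output of weight `w` with its value at `1⋯1`. -/
lemma abs_sub_mul_add_le_add_mul_sub {p r : ℝ} {n w s : ℕ} (hr0 : 0 ≤ r) (hr1 : r ≤ 1)
    (hp : 1 / 2 ≤ p) (hp1 : p ≤ 1) (hs : s ≤ w + n) (hw : w ≤ s + n) :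
    |p * r ^ s - (1 - p) * r ^ w| * (p + (1 - p) * r ^ n)
      ≤ (p * r ^ s + (1 - p) * r ^ w) * (p - (1 - p) * r ^ n) := by
  have h1 : r ^ s * r ^ n ≤ r ^ w := pow_add r s n ▸ pow_le_pow_of_le_one hr0 hr1 hw
  have h2 : r ^ w * r ^ n ≤ r ^ s := pow_add r w n ▸ pow_le_pow_of_le_one hr0 hr1 hs
  have hpp : 0 ≤ p * (1 - p) := mul_nonneg (by linarith) (by linarith)
  have hsq : (1 - p) ^ 2 ≤ p ^ 2 := pow_le_pow_left₀ (by linarith) (by linarith) 2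
  have := pow_nonneg hr0 w
  have := pow_nonneg hr0 s
  rcases abs_cases (p * r ^ s - (1 - p) * r ^ w) with ⟨habs, -⟩ | ⟨habs, -⟩ <;> rw [habs]
  · nlinarith [mul_le_mul_of_nonneg_left h1 hpp]
  · nlinarith [mul_le_mul hsq h2 (by positivity) (by positivity)]

lemma mul_pow_lt_mul_pow {a b x y : ℝ} {n : ℕ} (hn : n ≠ 0) (hb : 0 ≤ b) (hba : b ≤ a)
    (hx : 0 ≤ x) (hxy : x * b < y * a) : x * b ^ n < y * a ^ n := by
  have ha : 0 < a := (hb.trans hba).lt_of_ne fun h => by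
    rw [← h, le_antisymm (h ▸ hba) hb] at hxy
    simp at hxy
  obtain ⟨k, rfl⟩ := Nat.exists_eq_succ_of_ne_zero hn
  calc x * b ^ (k + 1) = x * b * b ^ k := by ring
    _ ≤ x * b * a ^ k := mul_le_mul_of_nonneg_left (pow_le_pow_left₀ hb hba k) (mul_nonneg hx hb)
    _ < y * a * a ^ k := mul_lt_mul_of_pos_right hxy (pow_pos ha k)
    _ = y * a ^ (k + 1) := by ring

section Model

variable {n : ℕ} {p α : ℝ}

lemma mul_pow_add_mul_pow_nonneg (hp0 : 0 ≤ p) (hp1 : p ≤ 1) (hα0 : 0 ≤ α) (hα1 : α ≤ 1) :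
    0 ≤ p * (1 - α) ^ n + (1 - p) * α ^ n :=
  add_nonneg (mul_nonneg hp0 (pow_nonneg (by linarith) n))
    (mul_nonneg (by linarith) (pow_nonneg hα0 n))

lemma bern_nonneg_s14 {q : ℝ} (hq0 : 0 ≤ q) (hq1 : q ≤ 1) (b : Bool) : 0 ≤ bern q b := by
  cases b <;> simp [bern] <;> linarith

lemma jointTheta_nonneg (hp0 : 0 ≤ p) (hp1 : p ≤ 1) (hα0 : 0 ≤ α) (hα1 : α ≤ 1) (t : Bool)
    (y : Fin n → Bool) : 0 ≤ jointTheta n p α t y :=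
  mul_nonneg (bern_nonneg_s14 hp0 hp1 t) <| prod_nonneg fun k _ =>
    bern_nonneg_s14 (by split_ifs <;> linarith) (by split_ifs <;> linarith) (y k)

lemma sum_prod_bern {ι : Type*} [Fintype ι] [DecidableEq ι] (q : ℝ) :
    ∑ y : ι → Bool, ∏ k, bern q (y k) = 1 := by
  rw [← Fintype.prod_sum fun _ b => bern q b]
  simp [bern]

lemma sum_sum_jointTheta : ∑ y, ∑ t, jointTheta n p α t y = 1 := by
  rw [Finset.sum_comm, Fintype.sum_bool]
  simp only [jointTheta, ← Finset.mul_sum, sum_prod_bern]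
  simp [bern]

lemma jointTheta_true_eq (hα : α ≠ 1) (y : Fin n → Bool) :
    jointTheta n p α true y = (1 - α) ^ n * (p * (α / (1 - α)) ^ (n - weight y)) := by
  have h1 : 1 - α ≠ 0 := sub_ne_zero.2 hα.symm
  have hb : ∀ b, bern (1 - α) b = (1 - α) * (if b then 1 else α / (1 - α)) := by
    intro b
    cases b <;> simp [bern, mul_div_cancel₀ α h1]
  simp only [jointTheta, if_true, hb, prod_mul_distrib, prod_const, card_univ, Fintype.card_fin,
    prod_ite_eq_pow_weight, one_pow, one_mul]
  simp only [bern, if_true]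
  ring

lemma jointTheta_false_eq (hα : α ≠ 1) (y : Fin n → Bool) :
    jointTheta n p α false y = (1 - α) ^ n * ((1 - p) * (α / (1 - α)) ^ weight y) := by
  have h1 : 1 - α ≠ 0 := sub_ne_zero.2 hα.symm
  have hb : ∀ b, bern α b = (1 - α) * (if b then α / (1 - α) else 1) := by
    intro b
    cases b <;> simp [bern, mul_div_cancel₀ α h1]
  simp only [jointTheta, Bool.false_eq_true, if_false, hb, prod_mul_distrib, prod_const, card_univ,
    Fintype.card_fin, prod_ite_eq_pow_weight, one_pow, mul_one]
  simp only [bern, Bool.false_eq_true, if_false]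
  ring

lemma iSup_jointTheta {m : ℕ} (hp : 1 / 2 ≤ p) (hα0 : 0 ≤ α) (hα : α ≤ 1 / 2)
    (hnt : α * p ≤ (1 - α) * (1 - p)) (y : Fin (2 * m + 1) → Bool) :
    ⨆ t, jointTheta (2 * m + 1) p α t y = (1 - α) ^ (2 * m + 1) *
      if weight y ≤ m then (1 - p) * (α / (1 - α)) ^ weight y
      else p * (α / (1 - α)) ^ (2 * m + 1 - weight y) := by
  have hα1 : 1 - α ≠ 0 := by linarith
  set r := α / (1 - α)
  have hr0 : 0 ≤ r := div_nonneg hα0 (by linarith)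
  have hr1 : r ≤ 1 := (div_le_one (by linarith)).2 (by linarith)
  have hpr : p * r ≤ 1 - p := by
    rw [mul_div_assoc', div_le_iff₀ (by linarith)]
    linarith
  have hw := weight_le y
  rw [ciSup_bool_eq_max, jointTheta_true_eq (by linarith), jointTheta_false_eq (by linarith)]
  split_ifs with hlow
  · refine max_eq_right (mul_le_mul_of_nonneg_left ?_ (pow_nonneg (by linarith) _))
    calc p * r ^ (2 * m + 1 - weight y) ≤ p * r ^ (weight y + 1) :=
          mul_le_mul_of_nonneg_left (pow_le_pow_of_le_one hr0 hr1 (by omega)) (by linarith)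
      _ = p * r * r ^ weight y := by ring
      _ ≤ (1 - p) * r ^ weight y := mul_le_mul_of_nonneg_right hpr (pow_nonneg hr0 _)
  · refine max_eq_left (mul_le_mul_of_nonneg_left ?_ (pow_nonneg (by linarith) _))
    exact mul_le_mul (by linarith) (pow_le_pow_of_le_one hr0 hr1 (by omega)) (pow_nonneg hr0 _)
      (by linarith)

theorem sum_iSup_jointTheta {m : ℕ} (hp : 1 / 2 ≤ p) (hα0 : 0 ≤ α) (hα : α ≤ 1 / 2)
    (hnt : α * p ≤ (1 - α) * (1 - p)) :
    ∑ y, ⨆ t, jointTheta (2 * m + 1) p α t y = (1 - α) ^ (2 * m + 1) *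
      ∑ k ∈ range (m + 1), ((2 * m + 1).choose k : ℝ) * (α / (1 - α)) ^ k := by
  simp only [iSup_jointTheta hp hα0 hα hnt, ← Finset.mul_sum]
  rw [sum_weight fun k => if k ≤ m then (1 - p) * (α / (1 - α)) ^ k
      else p * (α / (1 - α)) ^ (2 * m + 1 - k),
    sum_range_choose_smul_ite m (fun k => (1 - p) * (α / (1 - α)) ^ k)
      fun k => p * (α / (1 - α)) ^ k]
  congr 1
  exact Finset.sum_congr rfl fun k _ => by rw [nsmul_eq_mul]; ring

lemma jointTheta_gap (hp : 1 / 2 ≤ p) (hp1 : p ≤ 1) (hα0 : 0 ≤ α) (hα : α ≤ 1 / 2)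
    (t t' : Bool) (y : Fin n → Bool) :
    (p * (1 - α) ^ n + (1 - p) * α ^ n) * (jointTheta n p α t y - jointTheta n p α t' y)
      ≤ (p * (1 - α) ^ n - (1 - p) * α ^ n) * ∑ t'', jointTheta n p α t'' y := by
  have hα1 : α ≠ 1 := by linarith
  set r := α / (1 - α)
  have hr0 : 0 ≤ r := div_nonneg hα0 (by linarith)
  have hr1 : r ≤ 1 := (div_le_one (by linarith)).2 (by linarith)
  have hαn : α ^ n = (1 - α) ^ n * r ^ n := by rw [← mul_pow, mul_div_cancel₀ α (by linarith)]
  have hw := weight_le y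
  have hgap := abs_sub_mul_add_le_add_mul_sub (n := n) (w := weight y) (s := n - weight y)
    hr0 hr1 hp hp1 (by omega) (by omega)
  have hc := mul_pow_add_mul_pow_nonneg (n := n) (by linarith) hp1 hα0 (by linarith)
  calc (p * (1 - α) ^ n + (1 - p) * α ^ n) * (jointTheta n p α t y - jointTheta n p α t' y)
      ≤ (p * (1 - α) ^ n + (1 - p) * α ^ n) *
          |jointTheta n p α true y - jointTheta n p α false y| := by
        refine mul_le_mul_of_nonneg_left ?_ hc
        cases t <;> cases t' <;> first
          | simp only [sub_self, abs_nonneg]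
          | exact le_abs_self _
          | exact abs_sub_comm (jointTheta n p α true y) _ ▸ le_abs_self _
    _ = ((1 - α) ^ n) ^ 2 * (|p * r ^ (n - weight y) - (1 - p) * r ^ weight y|
          * (p + (1 - p) * r ^ n)) := by
        rw [jointTheta_true_eq hα1, jointTheta_false_eq hα1, ← mul_sub, abs_mul,
          abs_of_nonneg (pow_nonneg (by linarith) n), hαn]
        ring
    _ ≤ ((1 - α) ^ n) ^ 2 * ((p * r ^ (n - weight y) + (1 - p) * r ^ weight y)
          * (p - (1 - p) * r ^ n)) := by gcongr
    _ = _ := by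
        rw [Fintype.sum_bool, jointTheta_true_eq hα1, jointTheta_false_eq hα1, hαn]
        ring

theorem mul_sub_pcXZ_jointTheta_le (hp : 1 / 2 ≤ p) (hp1 : p ≤ 1) (hα0 : 0 ≤ α)
    (hα : α ≤ 1 / 2) {F : (Fin n → Bool) → (Fin n → Bool) → ℝ} (hF : IsChannel F) :
    (p * (1 - α) ^ n + (1 - p) * α ^ n) *
        ((∑ y, ⨆ t, jointTheta n p α t y) - pcXZ (jointTheta n p α) F)
      ≤ (p * (1 - α) ^ n - (1 - p) * α ^ n) * (1 - pcYZ (jointTheta n p α) F) := by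
  have hc := mul_pow_add_mul_pow_nonneg (n := n) (by linarith) hp1 hα0 (by linarith)
  simpa only [sum_sum_jointTheta] using
    mul_sub_pcXZ_le_mul_sub_pcYZ hF hc (jointTheta_gap hp hp1 hα0 hα)

lemma jointTheta_const_true (t : Bool) :
    jointTheta n p α t (fun _ => true) = if t then p * (1 - α) ^ n else (1 - p) * α ^ n := by
  cases t <;> simp [jointTheta, bern]

lemma jointTheta_const_false (t : Bool) :
    jointTheta n p α t (fun _ => false) = if t then p * α ^ n else (1 - p) * (1 - α) ^ n := by
  cases t <;> simp [jointTheta, bern]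

lemma const_false_ne_const_true [NeZero n] : (fun _ : Fin n => false) ≠ fun _ => true :=
  fun h => by simpa using congrFun h 0

lemma pcXZ_jointTheta_Zch [NeZero n] {ζ : ℝ} (hd : (1 - p) * α ^ n ≤ p * (1 - α) ^ n)
    (hζ0 : 0 ≤ ζ) (hζ1 : ζ ≤ 1)
    (hζ : ζ * (p * (1 - α) ^ n - (1 - p) * α ^ n) ≤ (1 - p) * (1 - α) ^ n - p * α ^ n) :
    pcXZ (jointTheta n p α) (Zch (fun _ => true) (fun _ => false) ζ)
      = (∑ y, ⨆ t, jointTheta n p α t y) - ζ * (p * (1 - α) ^ n - (1 - p) * α ^ n) := by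
  rw [pcXZ_Zch _ const_false_ne_const_true hζ1]
  simp only [ciSup_bool_eq_max, jointTheta_const_true, jointTheta_const_false, if_true,
    Bool.false_eq_true, if_false]
  rw [max_eq_right (by nlinarith), max_eq_right (by nlinarith), max_eq_left hd]
  ring

lemma pcYZ_jointTheta_Zch [NeZero n] {ζ : ℝ} (hp0 : 0 ≤ p) (hp1 : p ≤ 1) (hα0 : 0 ≤ α)
    (hα1 : α ≤ 1) (hζ1 : ζ ≤ 1)
    (hζ : ζ * (p * (1 - α) ^ n + (1 - p) * α ^ n) ≤ p * α ^ n + (1 - p) * (1 - α) ^ n) :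
    pcYZ (jointTheta n p α) (Zch (fun _ => true) (fun _ => false) ζ)
      = 1 - ζ * (p * (1 - α) ^ n + (1 - p) * α ^ n) := by
  have hQ : ∀ y, 0 ≤ ∑ t, jointTheta n p α t y := fun y =>
    sum_nonneg fun t _ => jointTheta_nonneg hp0 hp1 hα0 hα1 t y
  have hζQ : ζ * ∑ t, jointTheta n p α t (fun _ => true)
      ≤ ∑ t, jointTheta n p α t fun _ => false := by
    simpa [Fintype.sum_bool, jointTheta_const_true, jointTheta_const_false] using hζ
  rw [pcYZ_Zch _ const_false_ne_const_true hQ hζ1 hζQ, sum_sum_jointTheta]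
  simp [jointTheta_const_true]

theorem isGreatest_pcYZ_jointTheta [NeZero n] (hp : 1 / 2 ≤ p) (hp1 : p ≤ 1) (hα0 : 0 ≤ α)
    (hα : α < 1 / 2) {ε ζ : ℝ} (hζ0 : 0 ≤ ζ)
    (hζε : ζ * (p * (1 - α) ^ n - (1 - p) * α ^ n) = (∑ y, ⨆ t, jointTheta n p α t y) - ε)
    (hζ : ζ * (p * (1 - α) ^ n - (1 - p) * α ^ n) ≤ (1 - p) * (1 - α) ^ n - p * α ^ n) :
    IsGreatest {u | ∃ F, IsChannel F ∧ pcXZ (jointTheta n p α) F ≤ ε ∧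
        u = pcYZ (jointTheta n p α) F} (1 - ζ * (p * (1 - α) ^ n + (1 - p) * α ^ n)) ∧
      IsChannel (Zch (fun _ : Fin n => true) (fun _ => false) ζ) ∧
      pcXZ (jointTheta n p α) (Zch (fun _ => true) (fun _ => false) ζ) = ε ∧
      pcYZ (jointTheta n p α) (Zch (fun _ => true) (fun _ => false) ζ)
        = 1 - ζ * (p * (1 - α) ^ n + (1 - p) * α ^ n) := by
  have hd : (1 - p) * α ^ n < p * (1 - α) ^ n :=
    mul_pow_lt_mul_pow (NeZero.ne n) hα0 (by linarith) (by linarith) (by nlinarith)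
  have hb : 0 ≤ (1 - p) * α ^ n := mul_nonneg (by linarith) (pow_nonneg hα0 n)
  have hζ1 : ζ ≤ 1 := by
    refine le_of_mul_le_mul_right ?_ (sub_pos.2 hd)
    nlinarith [pow_nonneg hα0 n]
  have hζb : ζ * ((1 - p) * α ^ n) ≤ (1 - p) * α ^ n := mul_le_of_le_one_left hb hζ1
  have hZ := isChannel_Zch (const_false_ne_const_true (n := n)) hζ0 hζ1
  have hXZ : pcXZ (jointTheta n p α) (Zch (fun _ => true) (fun _ => false) ζ) = ε := by
    rw [pcXZ_jointTheta_Zch hd.le hζ0 hζ1 hζ, hζε, sub_sub_cancel]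
  have hYZ := pcYZ_jointTheta_Zch (by linarith) hp1 hα0 (by linarith) hζ1
    (by nlinarith [pow_nonneg hα0 n])
  refine ⟨⟨⟨_, hZ, hXZ.le, hYZ.symm⟩, ?_⟩, hZ, hXZ, hYZ⟩
  rintro _ ⟨F, hF, hFε, rfl⟩
  have htrade := mul_sub_pcXZ_jointTheta_le hp hp1 hα0 hα.le hF
  have hc := mul_pow_add_mul_pow_nonneg (n := n) (by linarith) hp1 hα0 (by linarith)
  have hε := mul_le_mul_of_nonneg_left (sub_le_sub_left hFε (∑ y, ⨆ t, jointTheta n p α t y)) hc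
  rw [← hζε] at hε
  have hdζc : (p * (1 - α) ^ n - (1 - p) * α ^ n) * (ζ * (p * (1 - α) ^ n + (1 - p) * α ^ n))
      ≤ (p * (1 - α) ^ n - (1 - p) * α ^ n) * (1 - pcYZ (jointTheta n p α) F) := by
    linarith
  linarith [le_of_mul_le_mul_left hdζc (sub_pos.2 hd)]

end Model

theorem private_parameter_high_utility_general (m : ℕ) (p α : ℝ)
    (hp : p ∈ Set.Ico (1 / 2 : ℝ) 1) (hα : α ∈ Set.Ioo (0 : ℝ) (1 / 2))
    (hnt : α * p < (1 - α) * (1 - p)) :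
    (∑ y, ⨆ t, jointTheta (2 * m + 1) p α t y) =
      (1 - α) ^ (2 * m + 1) *
        ∑ k ∈ Finset.range (m + 1),
          (Nat.choose (2 * m + 1) k : ℝ) * (α / (1 - α)) ^ k ∧
    (let T : ℝ := (1 - α) ^ (2 * m + 1) *
        ∑ k ∈ Finset.range (m + 1),
          (Nat.choose (2 * m + 1) k : ℝ) * (α / (1 - α)) ^ k
     ∃ εL < T, ∀ ε ∈ Set.Icc εL T,
      let ζ : ℝ := (T - ε) /
        (p * (1 - α) ^ (2 * m + 1) - (1 - p) * α ^ (2 * m + 1))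
      let Z := Zch (fun _ : Fin (2 * m + 1) => true) (fun _ : Fin (2 * m + 1) => false) ζ
      sSup {u | ∃ F : (Fin (2 * m + 1) → Bool) → (Fin (2 * m + 1) → Bool) → ℝ,
          IsChannel F ∧ pcXZ (jointTheta (2 * m + 1) p α) F ≤ ε ∧
          u = pcYZ (jointTheta (2 * m + 1) p α) F} =
        1 - ζ * (p * (1 - α) ^ (2 * m + 1) + (1 - p) * α ^ (2 * m + 1)) ∧
      (IsChannel Z ∧ pcXZ (jointTheta (2 * m + 1) p α) Z ≤ ε ∧
        pcYZ (jointTheta (2 * m + 1) p α) Z =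
          1 - ζ * (p * (1 - α) ^ (2 * m + 1) + (1 - p) * α ^ (2 * m + 1)))) := by
  obtain ⟨hp, hp1⟩ := hp
  obtain ⟨hα0, hα⟩ := hα
  have hT := sum_iSup_jointTheta (m := m) hp hα0.le hα.le hnt.le
  refine ⟨hT, ?_⟩
  intro T
  have hd : (1 - p) * α ^ (2 * m + 1) < p * (1 - α) ^ (2 * m + 1) :=
    mul_pow_lt_mul_pow (by omega) hα0.le (by linarith) (by linarith) (by nlinarith)
  have he : p * α ^ (2 * m + 1) < (1 - p) * (1 - α) ^ (2 * m + 1) :=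
    mul_pow_lt_mul_pow (by omega) hα0.le (by linarith) (by linarith) (by linarith)
  -- `ε ≥ εL` says exactly that the MAP guess at `0⋯0` is still `0` after the Z-channel.
  refine ⟨T - ((1 - p) * (1 - α) ^ (2 * m + 1) - p * α ^ (2 * m + 1)), by linarith,
    fun ε ⟨hεL, hεT⟩ => ?_⟩
  intro ζ Z
  have hζε : ζ * (p * (1 - α) ^ (2 * m + 1) - (1 - p) * α ^ (2 * m + 1))
      = (∑ y, ⨆ t, jointTheta (2 * m + 1) p α t y) - ε := by
    rw [hT]
    exact div_mul_cancel₀ _ (sub_pos.2 hd).ne'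
  obtain ⟨hmax, hZ, hXZ, hYZ⟩ := isGreatest_pcYZ_jointTheta hp hp1.le hα0.le hα
    (div_nonneg (by linarith) (sub_pos.2 hd).le) hζε (by rw [hζε, hT]; linarith)
  exact ⟨hmax.csSup_eq, hZ, hXZ.le, hYZ⟩

/-- Proposition 3: learning from a private distribution, odd
`n = 2m+1`. Here `P_c(θ|Y^n) = T = (1−α)^n Σ_{k=0}^{(n−1)/2} C(n,k)(α/(1−α))^k` and,
in the high-utility regime, the maximum of `P_c(Y^n|Z^n)` over channels with
`P_c(θ|Z^n) ≤ ε` equals `1 − ζ(ε)(p(1−α)^n + (1−p)α^n)`, attained by the `2^n`-ary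
Z-channel `Z_n(ζ(ε))`. -/
theorem private_parameter_high_utility (m : ℕ) (p α : ℝ)
    (hp : p ∈ Set.Ico (1 / 2 : ℝ) 1) (hα : α ∈ Set.Ioo (0 : ℝ) (1 / 2))
    (hnt : α * p < (1 - α) * (1 - p))
    (hlt : p < ∑ y, ⨆ t, jointTheta (2 * m + 1) p α t y) :
    (∑ y, ⨆ t, jointTheta (2 * m + 1) p α t y) =
      (1 - α) ^ (2 * m + 1) *
        ∑ k ∈ Finset.range (m + 1),
          (Nat.choose (2 * m + 1) k : ℝ) * (α / (1 - α)) ^ k ∧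
    (let T : ℝ := (1 - α) ^ (2 * m + 1) *
        ∑ k ∈ Finset.range (m + 1),
          (Nat.choose (2 * m + 1) k : ℝ) * (α / (1 - α)) ^ k
     ∃ εL < T, ∀ ε ∈ Set.Icc εL T,
      let ζ : ℝ := (T - ε) /
        (p * (1 - α) ^ (2 * m + 1) - (1 - p) * α ^ (2 * m + 1))
      let Z := Zch (fun _ : Fin (2 * m + 1) => true) (fun _ : Fin (2 * m + 1) => false) ζ
      sSup {u | ∃ F : (Fin (2 * m + 1) → Bool) → (Fin (2 * m + 1) → Bool) → ℝ,
          IsChannel F ∧ pcXZ (jointTheta (2 * m + 1) p α) F ≤ ε ∧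
          u = pcYZ (jointTheta (2 * m + 1) p α) F} =
        1 - ζ * (p * (1 - α) ^ (2 * m + 1) + (1 - p) * α ^ (2 * m + 1)) ∧
      (IsChannel Z ∧ pcXZ (jointTheta (2 * m + 1) p α) Z ≤ ε ∧
        pcYZ (jointTheta (2 * m + 1) p α) Z =
          1 - ζ * (p * (1 - α) ^ (2 * m + 1) + (1 - p) * α ^ (2 * m + 1)))) :=
  private_parameter_high_utility_general m p α hp hα hnt
end

section
/- For every G ∈ ℱ there exists δ > 0 such that for every D ∈ 𝒟(G): G + δD ∈ ℱ, and both functions t ↦ 𝒫(G + tD) and t ↦ 𝒰(G + tD) are affine in t on the interval [0, δ]. -/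
open Finset

/-- The privacy `𝒫(F) = P_c(X|Z)` of a filter `F`, for a joint pmf `P` of `(X,Y)` on
`{1,…,M} × {1,…,N}` (modeled as `Fin (M+1) × Fin (N+1)`), with `Z` on an alphabet of
size `N+2`. -/
noncomputable def privF {M N : ℕ} (P : Fin (M + 1) → Fin (N + 1) → ℝ)
    (F : Fin (N + 1) → Fin (N + 2) → ℝ) : ℝ :=
  ∑ z, ⨆ x, ∑ y, P x y * F y z

/-- The utility `𝒰(F) = P_c(Y|Z)` of a filter `F`. -/
noncomputable def utilF {M N : ℕ} (P : Fin (M + 1) → Fin (N + 1) → ℝ)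
    (F : Fin (N + 1) → Fin (N + 2) → ℝ) : ℝ :=
  ∑ z, ⨆ y, (∑ x, P x y) * F y z

/-- `F ∈ ℱ`: `F` is a row-stochastic `(N+1) × (N+2)` matrix. -/
def IsFilter {N : ℕ} (F : Fin (N + 1) → Fin (N + 2) → ℝ) : Prop :=
  (∀ y z, 0 ≤ F y z) ∧ ∀ y, ∑ z, F y z = 1

/-- The privacy-constrained guessing function `h(ε)`. -/
noncomputable def hFun {M N : ℕ} (P : Fin (M + 1) → Fin (N + 1) → ℝ) (ε : ℝ) : ℝ :=
  sSup {u | ∃ F, IsFilter F ∧ privF P F ≤ ε ∧ u = utilF P F}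

/-- `P_c(X)`. -/
noncomputable def PcX {M N : ℕ} (P : Fin (M + 1) → Fin (N + 1) → ℝ) : ℝ :=
  ⨆ x, ∑ y, P x y

/-- `P_c(X|Y)`. -/
noncomputable def PcXY {M N : ℕ} (P : Fin (M + 1) → Fin (N + 1) → ℝ) : ℝ :=
  ∑ y, ⨆ x, P x y

/-- The Euclidean (Frobenius) norm on `(N+1) × (N+2)` real matrices. -/
noncomputable def frob {N : ℕ} (D : Fin (N + 1) → Fin (N + 2) → ℝ) : ℝ :=
  Real.sqrt (∑ y, ∑ z, D y z ^ 2)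

lemma sup_affine_aux {ι : Type*} [Fintype ι] [Nonempty ι] (a b : ι → ℝ)
    (hb : ∀ i, |b i| ≤ 1) (δ : ℝ)
    (hgap : ∀ i, a i < (⨆ j, a j) → 2 * δ ≤ (⨆ j, a j) - a i) :
    ∃ i0, ∀ t ∈ Set.Icc (0 : ℝ) δ, (⨆ i, a i + t * b i) = a i0 + t * b i0 := by
  classical
  obtain ⟨im, him⟩ := Finite.exists_max a
  have hsup : (⨆ j, a j) = a im :=
    le_antisymm (ciSup_le him) (le_ciSup (Set.finite_range a).bddAbove im)
  set S := univ.filter (fun i => a i = a im) with hS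
  have hSne : S.Nonempty := ⟨im, by simp [hS]⟩
  obtain ⟨i0, hi0S, hi0⟩ := S.exists_max_image b hSne
  have hai0 : a i0 = a im := by
    have := hi0S; simp [hS] at this; exact this
  refine ⟨i0, fun t ht => ?_⟩
  obtain ⟨ht0, htδ⟩ := ht
  have key : ∀ i, a i + t * b i ≤ a i0 + t * b i0 := by
    intro i
    by_cases hc : a i = a im
    · have hbb : b i ≤ b i0 := hi0 i (by simp [hS, hc])
      have := mul_le_mul_of_nonneg_left hbb ht0
      have h2 : a i = a i0 := by rw [hc, hai0]
      linarith
    · have hlt : a i < (⨆ j, a j) := by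
        rw [hsup]; exact lt_of_le_of_ne (him i) hc
      have hg := hgap i hlt
      rw [hsup] at hg
      have h1 := abs_le.mp (hb i)
      have h2 := abs_le.mp (hb i0)
      nlinarith [mul_nonneg ht0 (sub_nonneg.mpr h2.1),
        mul_nonneg (sub_nonneg.mpr htδ) (sub_nonneg.mpr h1.2),
        mul_nonneg (sub_nonneg.mpr htδ) (sub_nonneg.mpr h2.1)]
  exact le_antisymm (ciSup_le key)
    (le_ciSup (Set.finite_range fun i => a i + t * b i).bddAbove i0)


/-- Lemma 5: local linearity of the map `F ↦ (𝒫(F), 𝒰(F))`. For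
every `G ∈ ℱ` there exists `δ > 0` such that for every admissible direction `D`
(`‖D‖ = 1` and `G + tD ∈ ℱ` for some `t > 0`): `G + δD ∈ ℱ`, and both
`t ↦ 𝒫(G + tD)` and `t ↦ 𝒰(G + tD)` are affine on `[0, δ]`. -/
theorem local_linearity {M N : ℕ} (P : Fin (M + 1) → Fin (N + 1) → ℝ)
    (hpos : ∀ x y, 0 ≤ P x y) (hsum : ∑ x, ∑ y, P x y = 1) :
    ∀ G : Fin (N + 1) → Fin (N + 2) → ℝ, IsFilter G →
      ∃ δ > (0 : ℝ), ∀ D : Fin (N + 1) → Fin (N + 2) → ℝ, frob D = 1 →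
        (∃ t > (0 : ℝ), IsFilter (fun y z => G y z + t * D y z)) →
        IsFilter (fun y z => G y z + δ * D y z) ∧
        ∃ a b a' b' : ℝ, ∀ t ∈ Set.Icc (0 : ℝ) δ,
          privF P (fun y z => G y z + t * D y z) = a * t + b ∧
          utilF P (fun y z => G y z + t * D y z) = a' * t + b' := by
  intro G hG
  classical
  -- row sums of P bounded by 1
  have hProw : ∀ x : Fin (M + 1), ∑ y, P x y ≤ 1 := by
    intro x
    rw [← hsum]
    exact Finset.single_le_sum (f := fun x => ∑ y, P x y)
      (fun x _ => Finset.sum_nonneg fun y _ => hpos x y) (mem_univ x)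
  have hq : ∀ y : Fin (N + 1), (0 : ℝ) ≤ ∑ x, P x y ∧ (∑ x, P x y) ≤ 1 := by
    intro y
    constructor
    · exact Finset.sum_nonneg fun x _ => hpos x y
    · rw [← hsum, Finset.sum_comm]
      exact Finset.single_le_sum (f := fun y => ∑ x, P x y)
        (fun y _ => Finset.sum_nonneg fun x _ => hpos x y) (mem_univ y)
  set A : Fin (N + 2) → Fin (M + 1) → ℝ := fun z x => ∑ y, P x y * G y z with hA
  set U : Fin (N + 2) → Fin (N + 1) → ℝ := fun z y => (∑ x, P x y) * G y z with hU
  set T1 := (univ : Finset (Fin (N + 2) × Fin (M + 1))).filter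
    (fun p => A p.1 p.2 < ⨆ x, A p.1 x) with hT1
  set T2 := (univ : Finset (Fin (N + 2) × Fin (N + 1))).filter
    (fun p => U p.1 p.2 < ⨆ y, U p.1 y) with hT2
  set T3 := (univ : Finset (Fin (N + 1) × Fin (N + 2))).filter
    (fun p => 0 < G p.1 p.2) with hT3
  have hT3ne : T3.Nonempty := by
    have h0 : (0 : ℝ) < ∑ z, G 0 z := by rw [hG.2 0]; norm_num
    have : ∃ z ∈ (univ : Finset (Fin (N + 2))), (0:ℝ) < G 0 z := by
      by_contra h
      push_neg at h
      have : ∑ z, G 0 z ≤ 0 := Finset.sum_nonpos fun z hz => h z hz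
      linarith
    obtain ⟨z, _, hz⟩ := this
    exact ⟨(0, z), by simp [hT3, hz]⟩
  set δ1 : ℝ := if h : T1.Nonempty then
    T1.inf' h (fun p => ((⨆ x, A p.1 x) - A p.1 p.2) / 2) else 1 with hδ1
  set δ2 : ℝ := if h : T2.Nonempty then
    T2.inf' h (fun p => ((⨆ y, U p.1 y) - U p.1 p.2) / 2) else 1 with hδ2
  set δ3 : ℝ := T3.inf' hT3ne (fun p => G p.1 p.2) with hδ3
  have hδ1pos : 0 < δ1 := by
    rw [hδ1]
    split_ifs with h
    · rw [Finset.lt_inf'_iff]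
      intro p hp
      rw [hT1, Finset.mem_filter] at hp
      linarith [hp.2]
    · norm_num
  have hδ2pos : 0 < δ2 := by
    rw [hδ2]
    split_ifs with h
    · rw [Finset.lt_inf'_iff]
      intro p hp
      rw [hT2, Finset.mem_filter] at hp
      linarith [hp.2]
    · norm_num
  have hδ3pos : 0 < δ3 := by
    rw [hδ3, Finset.lt_inf'_iff]
    intro p hp
    rw [hT3, Finset.mem_filter] at hp
    exact hp.2
  set δ := min δ1 (min δ2 δ3) with hδdef
  have hδpos : 0 < δ := lt_min hδ1pos (lt_min hδ2pos hδ3pos)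
  refine ⟨δ, hδpos, ?_⟩
  intro D hD hadm
  -- entries of D bounded by 1
  have hDsq : ∑ y, ∑ z, D y z ^ 2 = 1 := by
    have h0 : (0:ℝ) ≤ ∑ y, ∑ z, D y z ^ 2 :=
      Finset.sum_nonneg fun y _ => Finset.sum_nonneg fun z _ => sq_nonneg _
    have := hD
    rw [frob] at this
    nlinarith [Real.sq_sqrt h0, this]
  have hDle : ∀ y z, |D y z| ≤ 1 := by
    intro y z
    rw [← sq_le_one_iff_abs_le_one]
    calc D y z ^ 2 ≤ ∑ z', D y z' ^ 2 :=
          Finset.single_le_sum (f := fun z' => D y z' ^ 2)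
            (fun z' _ => sq_nonneg _) (mem_univ z)
      _ ≤ ∑ y', ∑ z', D y' z' ^ 2 :=
          Finset.single_le_sum (f := fun y' => ∑ z', D y' z' ^ 2)
            (fun y' _ => Finset.sum_nonneg fun z' _ => sq_nonneg _) (mem_univ y)
      _ = 1 := hDsq
  obtain ⟨t0, ht0pos, ht0⟩ := hadm
  -- row sums of D vanish
  have hDrow : ∀ y, ∑ z, D y z = 0 := by
    intro y
    have h1 : ∑ z, (G y z + t0 * D y z) = 1 := ht0.2 y
    have h2 := hG.2 y
    simp only [Finset.sum_add_distrib, ← Finset.mul_sum] at h1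
    have : t0 * ∑ z, D y z = 0 := by linarith
    exact (mul_eq_zero.mp this).resolve_left (ne_of_gt ht0pos)
  -- filter membership
  have hfil : IsFilter (fun y z => G y z + δ * D y z) := by
    constructor
    · intro y z
      show 0 ≤ G y z + δ * D y z
      by_cases hc : 0 ≤ D y z
      · have : 0 ≤ δ * D y z := mul_nonneg hδpos.le hc
        linarith [hG.1 y z]
      · push_neg at hc
        have hGpos : 0 < G y z := by
          have h0 : 0 ≤ G y z + t0 * D y z := ht0.1 y z
          nlinarith
        have hmem : (y, z) ∈ T3 := by simp [hT3, hGpos]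
        have h1 : δ3 ≤ G y z := Finset.inf'_le _ hmem
        have h2 : δ ≤ δ3 := le_trans (min_le_right _ _) (min_le_right _ _)
        have h3 : -1 ≤ D y z := (abs_le.mp (hDle y z)).1
        nlinarith
    · intro y
      show ∑ z, (G y z + δ * D y z) = 1
      simp only [Finset.sum_add_distrib, ← Finset.mul_sum, hDrow y, mul_zero, add_zero]
      exact hG.2 y
  refine ⟨hfil, ?_⟩
  -- privacy part
  have hprivz : ∀ z : Fin (N + 2), ∃ x0, ∀ t ∈ Set.Icc (0 : ℝ) δ,
      (⨆ x, ∑ y, P x y * (G y z + t * D y z)) =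
        A z x0 + t * ∑ y, P x0 y * D y z := by
    intro z
    have hb : ∀ x, |∑ y, P x y * D y z| ≤ 1 := by
      intro x
      calc |∑ y, P x y * D y z| ≤ ∑ y, |P x y * D y z| :=
            Finset.abs_sum_le_sum_abs _ _
        _ ≤ ∑ y, P x y := by
            apply Finset.sum_le_sum
            intro y _
            rw [abs_mul, abs_of_nonneg (hpos x y)]
            calc P x y * |D y z| ≤ P x y * 1 :=
                  mul_le_mul_of_nonneg_left (hDle y z) (hpos x y)
              _ = P x y := mul_one _
        _ ≤ 1 := hProw x
    have hgap : ∀ x, A z x < (⨆ x', A z x') → 2 * δ ≤ (⨆ x', A z x') - A z x := by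
      intro x hx
      have hmem : (z, x) ∈ T1 := by simp [hT1, hx]
      have hne : T1.Nonempty := ⟨(z, x), hmem⟩
      have h1 : δ1 ≤ ((⨆ x', A z x') - A z x) / 2 := by
        rw [hδ1, dif_pos hne]
        exact Finset.inf'_le _ hmem
      have h2 : δ ≤ δ1 := min_le_left _ _
      linarith
    obtain ⟨x0, hx0⟩ := sup_affine_aux (A z) (fun x => ∑ y, P x y * D y z) hb δ hgap
    refine ⟨x0, fun t ht => ?_⟩
    have hcong : (⨆ x, ∑ y, P x y * (G y z + t * D y z)) =
        ⨆ x, (A z x + t * ∑ y, P x y * D y z) := by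
      apply iSup_congr
      intro x
      rw [hA]
      simp only [Finset.mul_sum]
      rw [← Finset.sum_add_distrib]
      apply Finset.sum_congr rfl
      intro y _
      ring
    rw [hcong]
    exact hx0 t ht
  choose xp hxp using hprivz
  -- utility part
  have hutilz : ∀ z : Fin (N + 2), ∃ y0, ∀ t ∈ Set.Icc (0 : ℝ) δ,
      (⨆ y, (∑ x, P x y) * (G y z + t * D y z)) =
        U z y0 + t * ((∑ x, P x y0) * D y0 z) := by
    intro z
    have hb : ∀ y, |(∑ x, P x y) * D y z| ≤ 1 := by
      intro y
      rw [abs_mul, abs_of_nonneg (hq y).1]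
      calc (∑ x, P x y) * |D y z| ≤ 1 * 1 :=
            mul_le_mul (hq y).2 (hDle y z) (abs_nonneg _) zero_le_one
        _ = 1 := one_mul 1
    have hgap : ∀ y, U z y < (⨆ y', U z y') → 2 * δ ≤ (⨆ y', U z y') - U z y := by
      intro y hy
      have hmem : (z, y) ∈ T2 := by simp [hT2, hy]
      have hne : T2.Nonempty := ⟨(z, y), hmem⟩
      have h1 : δ2 ≤ ((⨆ y', U z y') - U z y) / 2 := by
        rw [hδ2, dif_pos hne]
        exact Finset.inf'_le _ hmem
      have h2 : δ ≤ δ2 := le_trans (min_le_right _ _) (min_le_left _ _)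
      linarith
    obtain ⟨y0, hy0⟩ := sup_affine_aux (U z) (fun y => (∑ x, P x y) * D y z) hb δ hgap
    refine ⟨y0, fun t ht => ?_⟩
    have hcong : (⨆ y, (∑ x, P x y) * (G y z + t * D y z)) =
        ⨆ y, (U z y + t * ((∑ x, P x y) * D y z)) := by
      apply iSup_congr
      intro y
      rw [hU]
      ring
    rw [hcong]
    exact hy0 t ht
  choose yp hyp using hutilz
  refine ⟨∑ z, ∑ y, P (xp z) y * D y z, ∑ z, A z (xp z),
    ∑ z, (∑ x, P x (yp z)) * D (yp z) z, ∑ z, U z (yp z), ?_⟩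
  intro t ht
  constructor
  · rw [privF]
    rw [Finset.sum_congr rfl fun z _ => hxp z t ht]
    rw [Finset.sum_add_distrib, ← Finset.mul_sum]
    ring
  · rw [utilF]
    rw [Finset.sum_congr rfl fun z _ => hyp z t ht]
    rw [Finset.sum_add_distrib, ← Finset.mul_sum]
    ring
end

section
/- If P_c(X) < P_c(X|Y), then the variant privacy-constrained guessing function h̲ is continuous at ε = P_c(X|Y); that is, h̲(P_c(X|Y)) = 1 and h̲(ε) → 1 as ε → P_c(X|Y) from the left within [P_c(X), P_c(X|Y)]. -/
open Finset

/-- Privacy `𝒫(F) = P_c(X|Z)` of a square `(N+1)×(N+1)` filter, for a joint pmf `P` of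
`(X,Y)` on `Fin (M+1) × Fin (N+1)`. -/
noncomputable def privS {M N : ℕ} (P : Fin (M + 1) → Fin (N + 1) → ℝ)
    (F : Fin (N + 1) → Fin (N + 1) → ℝ) : ℝ :=
  ∑ z, ⨆ x, ∑ y, P x y * F y z

/-- Utility `𝒰(F) = P_c(Y|Z)` of a square filter. -/
noncomputable def utilS {M N : ℕ} (P : Fin (M + 1) → Fin (N + 1) → ℝ)
    (F : Fin (N + 1) → Fin (N + 1) → ℝ) : ℝ :=
  ∑ z, ⨆ y, (∑ x, P x y) * F y z

/-- `F` is a row-stochastic `(N+1)×(N+1)` matrix. -/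
def IsFilterS {N : ℕ} (F : Fin (N + 1) → Fin (N + 1) → ℝ) : Prop :=
  (∀ y z, 0 ≤ F y z) ∧ ∀ y, ∑ z, F y z = 1

/-- The variant privacy-constrained guessing function `h̲(ε)`, where the displayed
alphabet equals the alphabet of `Y`. -/
noncomputable def hUnder {M N : ℕ} (P : Fin (M + 1) → Fin (N + 1) → ℝ) (ε : ℝ) : ℝ :=
  sSup {u | ∃ F, IsFilterS F ∧ privS P F ≤ ε ∧ u = utilS P F}

section Aux
variable {M N : ℕ} (P : Fin (M + 1) → Fin (N + 1) → ℝ)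

lemma utilS_le_one (hpos : ∀ x y, 0 ≤ P x y) (hsum : ∑ x, ∑ y, P x y = 1)
    {F : Fin (N + 1) → Fin (N + 1) → ℝ} (hF : IsFilterS F) : utilS P F ≤ 1 := by
  have hq : ∀ y, 0 ≤ ∑ x, P x y := fun y => Finset.sum_nonneg fun x _ => hpos x y
  have key : ∀ z, (⨆ y, (∑ x, P x y) * F y z) ≤ ∑ y, (∑ x, P x y) * F y z := by
    intro z
    refine ciSup_le fun y => ?_
    exact Finset.single_le_sum (fun y' _ => mul_nonneg (hq y') (hF.1 y' z)) (mem_univ y)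
  calc utilS P F ≤ ∑ z, ∑ y, (∑ x, P x y) * F y z :=
        Finset.sum_le_sum fun z _ => key z
    _ = ∑ y, (∑ x, P x y) * ∑ z, F y z := by
        rw [Finset.sum_comm]; simp [Finset.mul_sum]
    _ = 1 := by
        simp only [hF.2, mul_one]
        rw [Finset.sum_comm]; exact hsum

/-- the identity filter is a filter -/
lemma id_filterS : IsFilterS (fun y z : Fin (N + 1) => if y = z then (1:ℝ) else 0) := by
  constructor
  · intro y z; by_cases h : y = z <;> simp [h]
  · intro y; simp

lemma privS_id : privS P (fun y z => if y = z then (1:ℝ) else 0) = PcXY P := by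
  unfold privS PcXY
  refine Finset.sum_congr rfl fun z _ => ?_
  congr 1; funext x
  simp [mul_ite]

lemma utilS_id (hpos : ∀ x y, 0 ≤ P x y) (hsum : ∑ x, ∑ y, P x y = 1) :
    utilS P (fun y z => if y = z then (1:ℝ) else 0) = 1 := by
  have hq : ∀ y, 0 ≤ ∑ x, P x y := fun y => Finset.sum_nonneg fun x _ => hpos x y
  unfold utilS
  have key : ∀ z : Fin (N+1),
      (⨆ y, (∑ x, P x y) * (if y = z then (1:ℝ) else 0)) = ∑ x, P x z := by
    intro z
    apply le_antisymm
    · refine ciSup_le fun y => ?_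
      by_cases h : y = z <;> simp [h, hq z]
    · have := le_ciSup
        (Finite.bddAbove_range fun y => (∑ x, P x y) * (if y = z then (1:ℝ) else 0)) z
      simpa using this
  rw [Finset.sum_congr rfl fun z _ => key z, Finset.sum_comm]; exact hsum

/-- mixture of the identity filter with the constant-column filter -/
noncomputable def Fmix (N : ℕ) (l : ℝ) : Fin (N + 1) → Fin (N + 1) → ℝ := fun y z =>
  (1 - l) * (if y = z then 1 else 0) + l * (if z = 0 then 1 else 0)

lemma Fmix_filter {l : ℝ} (h0 : 0 ≤ l) (h1 : l ≤ 1) : IsFilterS (Fmix N l) := by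
  constructor
  · intro y z
    apply add_nonneg
    · apply mul_nonneg (by linarith); split <;> norm_num
    · apply mul_nonneg h0; split <;> norm_num
  · intro y
    simp [Fmix, Finset.sum_add_distrib, ← Finset.mul_sum]

lemma privS_Fmix_le {l : ℝ} (h0 : 0 ≤ l) (h1 : l ≤ 1)
    (hpos : ∀ x y, 0 ≤ P x y) :
    privS P (Fmix N l) ≤ (1 - l) * PcXY P + l * PcX P := by
  have hrow : ∀ x z, ∑ y, P x y * Fmix N l y z =
      (1 - l) * P x z + l * (if z = 0 then (1:ℝ) else 0) * ∑ y, P x y := by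
    intro x z
    have h1 : ∀ y, P x y * Fmix N l y z =
        ((if y = z then (1-l) * P x y else 0) + l * (if z = 0 then (1:ℝ) else 0) * P x y) := by
      intro y
      by_cases h : y = z <;> by_cases hz : z = 0 <;> simp [Fmix, h, hz] <;> (try split_ifs) <;> ring
    rw [Finset.sum_congr rfl fun y _ => h1 y, Finset.sum_add_distrib,
      Finset.sum_ite_eq' univ z, ← Finset.mul_sum]
    simp
  have hsupP : ∀ z, (⨆ x, ∑ y, P x y * Fmix N l y z) ≤
      (1 - l) * (⨆ x, P x z) + l * (if z = 0 then (1:ℝ) else 0) * PcX P := by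
    intro z
    refine ciSup_le fun x => ?_
    rw [hrow x z]
    refine add_le_add ?_ ?_
    · exact mul_le_mul_of_nonneg_left
        (le_ciSup (Finite.bddAbove_range fun x => P x z) x) (by linarith)
    · exact mul_le_mul_of_nonneg_left
        (le_ciSup (Finite.bddAbove_range fun x => ∑ y, P x y) x)
        (mul_nonneg h0 (by split <;> norm_num))
  calc privS P (Fmix N l) ≤
      ∑ z, ((1 - l) * (⨆ x, P x z) + l * (if z = 0 then (1:ℝ) else 0) * PcX P) :=
        Finset.sum_le_sum fun z _ => hsupP z
    _ = (1 - l) * PcXY P + l * PcX P := by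
        rw [Finset.sum_add_distrib, ← Finset.mul_sum]
        congr 1
        have h2 : ∀ z : Fin (N+1), l * (if z = 0 then (1:ℝ) else 0) * PcX P =
            (if z = 0 then l * PcX P else 0) := fun z => by split <;> simp
        rw [Finset.sum_congr rfl fun z _ => h2 z,
          Finset.sum_ite_eq' univ (0 : Fin (N+1))]
        simp

lemma utilS_Fmix_ge {l : ℝ} (h0 : 0 ≤ l) (h1 : l ≤ 1)
    (hpos : ∀ x y, 0 ≤ P x y) (hsum : ∑ x, ∑ y, P x y = 1) :
    1 - l ≤ utilS P (Fmix N l) := by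
  have hq : ∀ y, 0 ≤ ∑ x, P x y := fun y => Finset.sum_nonneg fun x _ => hpos x y
  have key : ∀ z : Fin (N+1), (1 - l) * ∑ x, P x z ≤ ⨆ y, (∑ x, P x y) * Fmix N l y z := by
    intro z
    have hle : (1 - l) * ∑ x, P x z ≤ (∑ x, P x z) * Fmix N l z z := by
      have hf : (1 - l) ≤ Fmix N l z z := by
        simp only [Fmix]
        split_ifs <;> simp <;> linarith
      rw [mul_comm ((∑ x, P x z)) (Fmix N l z z)]
      exact mul_le_mul_of_nonneg_right hf (hq z)
    exact hle.trans (le_ciSup (Finite.bddAbove_range fun y => (∑ x, P x y) * Fmix N l y z) z)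
  calc 1 - l = (1 - l) * ∑ z, ∑ x, P x z := by rw [Finset.sum_comm, hsum, mul_one]
    _ = ∑ z, (1 - l) * ∑ x, P x z := by rw [Finset.mul_sum]
    _ ≤ utilS P (Fmix N l) := Finset.sum_le_sum fun z _ => key z

end Aux

/-- Lemma 7: if `P_c(X) < P_c(X|Y)`, then `h̲` is continuous at
`P_c(X|Y)`: `h̲(P_c(X|Y)) = 1` and `h̲(ε) → 1` as `ε → P_c(X|Y)` from the left
within `[P_c(X), P_c(X|Y)]`. -/
theorem hUnder_continuous_at_right_endpoint {M N : ℕ}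
    (P : Fin (M + 1) → Fin (N + 1) → ℝ)
    (hpos : ∀ x y, 0 ≤ P x y) (hsum : ∑ x, ∑ y, P x y = 1)
    (hlt : PcX P < PcXY P) :
    hUnder P (PcXY P) = 1 ∧
    Filter.Tendsto (hUnder P) (nhdsWithin (PcXY P) (Set.Ico (PcX P) (PcXY P)))
      (nhds 1) := by
  have hbdd : ∀ ε : ℝ, BddAbove {u | ∃ F, IsFilterS F ∧ privS P F ≤ ε ∧ u = utilS P F} := by
    intro ε
    refine ⟨1, fun u hu => ?_⟩
    obtain ⟨F, hF, _, rfl⟩ := hu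
    exact utilS_le_one P hpos hsum hF
  set D : ℝ := PcXY P - PcX P with hD
  have hDpos : 0 < D := sub_pos.mpr hlt
  -- value at the endpoint
  have h1 : hUnder P (PcXY P) = 1 := by
    have hmem1 : (1:ℝ) ∈ {u | ∃ F, IsFilterS F ∧ privS P F ≤ PcXY P ∧ u = utilS P F} :=
      ⟨(fun y z => if y = z then (1:ℝ) else 0), id_filterS,
        (privS_id P).le, (utilS_id P hpos hsum).symm⟩
    apply le_antisymm
    · exact csSup_le ⟨1, hmem1⟩
        (by rintro u ⟨F, hF, _, rfl⟩; exact utilS_le_one P hpos hsum hF)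
    · exact le_csSup (hbdd _) hmem1
  refine ⟨h1, ?_⟩
  -- squeeze between `1 - (PcXY P - ε)/D` and `1`
  have hlow : ∀ ε ∈ Set.Ico (PcX P) (PcXY P), 1 - (PcXY P - ε) / D ≤ hUnder P ε := by
    intro ε hε
    set l : ℝ := (PcXY P - ε) / D with hl
    have hl0 : 0 ≤ l := div_nonneg (by linarith [hε.2]) hDpos.le
    have hl1 : l ≤ 1 := by
      rw [hl, div_le_one hDpos]
      simp only [hD]
      linarith [hε.1]
    have hpriv : privS P (Fmix N l) ≤ ε := by
      have := privS_Fmix_le P hl0 hl1 hpos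
      have heq : (1 - l) * PcXY P + l * PcX P = ε := by
        rw [hl]
        field_simp
        ring
      linarith
    have hmem : utilS P (Fmix N l) ∈
        {u | ∃ F, IsFilterS F ∧ privS P F ≤ ε ∧ u = utilS P F} :=
      ⟨Fmix N l, Fmix_filter hl0 hl1, hpriv, rfl⟩
    calc 1 - l ≤ utilS P (Fmix N l) := utilS_Fmix_ge P hl0 hl1 hpos hsum
      _ ≤ hUnder P ε := le_csSup (hbdd ε) hmem
  have hup : ∀ ε ∈ Set.Ico (PcX P) (PcXY P), hUnder P ε ≤ 1 := by
    intro ε hε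
    have hmem : utilS P (Fmix N 1) ∈
        {u | ∃ F, IsFilterS F ∧ privS P F ≤ ε ∧ u = utilS P F} := by
      refine ⟨Fmix N 1, Fmix_filter zero_le_one le_rfl, ?_, rfl⟩
      have h := privS_Fmix_le P zero_le_one le_rfl hpos
      simp only [sub_self, zero_mul, one_mul, zero_add] at h
      linarith [hε.1]
    exact csSup_le ⟨_, hmem⟩
      (by rintro u ⟨F, hF, _, rfl⟩; exact utilS_le_one P hpos hsum hF)
  have hg : Filter.Tendsto (fun ε => 1 - (PcXY P - ε) / D)
      (nhdsWithin (PcXY P) (Set.Ico (PcX P) (PcXY P))) (nhds 1) := by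
    have hc : Continuous fun ε : ℝ => 1 - (PcXY P - ε) / D := by continuity
    have := hc.tendsto (PcXY P)
    simp only [sub_self, zero_div, sub_zero] at this
    exact this.mono_left nhdsWithin_le_nhds
  refine tendsto_of_tendsto_of_tendsto_of_le_of_le' hg tendsto_const_nhds ?_ ?_
  · exact Filter.eventually_of_mem self_mem_nhdsWithin hlow
  · exact Filter.eventually_of_mem self_mem_nhdsWithin hup
end
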